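/- arXiv:2102.04704 — 8 statements merged into one kernel-verified Lean document; each statement's English description precedes it below -/
import Mathlib

section
/- Let d ≥ 1, let W be a nonempty closed convex subset of ℝ^d, and let μ > 0, L_g ≥ 0. Let G : ℝ^d → ℝ be continuous, convex, and μ-strongly convex on W, and let g : ℝ^d → ℝ be continuous, convex on W, and L_g-Lipschitz on W. If w₁ minimizes G over W and w₂ minimizes G + g over W, then ‖w₁ − w₂‖₂ ≤ L_g/μ. -/
lemma aux_min_growth {d : ℕ} {W : Set (EuclideanSpace ℝ (Fin d))} {μ : ℝ} (hμ : 0 < μ)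
    {F : EuclideanSpace ℝ (Fin d) → ℝ} (hF : StrongConvexOn W μ F)
    {x y : EuclideanSpace ℝ (Fin d)} (hx : x ∈ W) (hy : y ∈ W)
    (hmin : ∀ w ∈ W, F x ≤ F w) :
    F x + μ / 2 * ‖x - y‖ ^ 2 ≤ F y := by
  set c : ℝ := μ / 2 * ‖x - y‖ ^ 2 with hc
  have hc0 : 0 ≤ c := by positivity
  have key : ∀ t : ℝ, 0 < t → t ≤ 1 → (1 - t) * c ≤ F y - F x := by
    intro t ht0 ht1
    have hab : t + (1 - t) = 1 := by ring
    have h1t : 0 ≤ 1 - t := by linarith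
    have hmem : t • y + (1 - t) • x ∈ W := hF.1 hy hx ht0.le h1t hab
    have h2 := hF.2 hy hx ht0.le h1t hab
    have h3 := hmin _ hmem
    have hnorm : ‖y - x‖ = ‖x - y‖ := norm_sub_rev _ _
    rw [hnorm] at h2
    have : F x ≤ t * F y + (1 - t) * F x - t * (1 - t) * c := by
      simpa [smul_eq_mul, hc] using h3.trans h2
    have h4 : t * ((1 - t) * c) ≤ t * (F y - F x) := by nlinarith
    exact le_of_mul_le_mul_left (by linarith [h4]) ht0
  have : c ≤ F y - F x := by
    refine le_of_forall_pos_le_add fun ε hε => ?_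
    rcases eq_or_lt_of_le hc0 with hceq | hcpos
    · have h := key 1 one_pos le_rfl
      rw [← hceq]
      nlinarith
    · set t : ℝ := min 1 (ε / c) with ht
      have ht0 : 0 < t := lt_min one_pos (div_pos hε hcpos)
      have ht1 : t ≤ 1 := min_le_left _ _
      have h5 := key t ht0 ht1
      have htc : t * c ≤ ε := by
        calc t * c ≤ (ε / c) * c := by
              apply mul_le_mul_of_nonneg_right (min_le_right _ _) hc0
          _ = ε := by field_simp
      nlinarith
  linarith

/-- If `G` is `μ`-strongly convex on a nonempty closed convex set `W`,
`g` is convex and `L_g`-Lipschitz on `W`, `w₁` minimizes `G` over `W`, and `w₂` minimizes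
`G + g` over `W`, then `‖w₁ - w₂‖ ≤ L_g / μ`. -/
theorem stmt_0 (d : ℕ) (hd : 1 ≤ d) (W : Set (EuclideanSpace ℝ (Fin d)))
    (hWne : W.Nonempty) (hWclosed : IsClosed W) (hWconv : Convex ℝ W)
    (μ Lg : ℝ) (hμ : 0 < μ) (hLg : 0 ≤ Lg)
    (G g : EuclideanSpace ℝ (Fin d) → ℝ)
    (hGcont : Continuous G) (hGconv : ConvexOn ℝ W G)
    (hGsconv : ConvexOn ℝ W (fun w => G w - μ / 2 * ‖w‖ ^ 2))
    (hgcont : Continuous g) (hgconv : ConvexOn ℝ W g)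
    (hgLip : ∀ w ∈ W, ∀ w' ∈ W, |g w - g w'| ≤ Lg * ‖w - w'‖)
    (w₁ w₂ : EuclideanSpace ℝ (Fin d)) (hw₁ : w₁ ∈ W) (hw₂ : w₂ ∈ W)
    (hw₁min : ∀ w ∈ W, G w₁ ≤ G w)
    (hw₂min : ∀ w ∈ W, G w₂ + g w₂ ≤ G w + g w) :
    ‖w₁ - w₂‖ ≤ Lg / μ := by
  have hGsc : StrongConvexOn W μ G := strongConvexOn_iff_convex.mpr hGsconv
  have hGgsc : StrongConvexOn W μ (fun w => G w + g w) := by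
    rw [strongConvexOn_iff_convex]
    have : ConvexOn ℝ W (fun w => (G w - μ / 2 * ‖w‖ ^ 2) + g w) := hGsconv.add hgconv
    convert this using 2 with w
    · rfl
    · ring
  have h1 := aux_min_growth hμ hGsc hw₁ hw₂ hw₁min
  have h2 := aux_min_growth hμ hGgsc hw₂ hw₁ hw₂min
  simp only [norm_sub_rev w₂ w₁] at h2
  have hgdiff : μ * ‖w₁ - w₂‖ ^ 2 ≤ g w₁ - g w₂ := by linarith
  have hlip := hgLip w₁ hw₁ w₂ hw₂
  have habs : g w₁ - g w₂ ≤ Lg * ‖w₁ - w₂‖ := (le_abs_self _).trans hlip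
  rcases eq_or_lt_of_le (norm_nonneg (w₁ - w₂)) with h0 | h0
  · rw [← h0]; positivity
  · rw [le_div_iff₀ hμ]
    have : μ * ‖w₁ - w₂‖ ^ 2 ≤ Lg * ‖w₁ - w₂‖ := by linarith
    nlinarith
end

section
/- Let d ≥ 1 and μ, L, R > 0. Let F₁, F₂ : ℝ^d → ℝ be continuous, μ-strongly convex on ℝ^d, and L-Lipschitz on B(0,R). Suppose w₁ minimizes F₁ over ℝ^d, w₂ minimizes F₂ over ℝ^d, and w₁, w₂ ∈ B(0,R). Then ‖w₁ − w₂‖₂ ≤ 2L/μ. (In particular, the L₂ sensitivity of any function in the class F_{μ,L,R} is at most 2L/μ.) -/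
/-- If `F` is `m`-strongly convex on `univ` and `w₁` is a global minimizer, then
`F w - F w₁ ≥ m/2 * ‖w - w₁‖²`. -/
lemma min_gap_of_strongConvex {d : ℕ} {m : ℝ} {F : EuclideanSpace ℝ (Fin d) → ℝ}
    (hF : StrongConvexOn Set.univ m F) (w₁ : EuclideanSpace ℝ (Fin d))
    (hmin : ∀ w, F w₁ ≤ F w) (w : EuclideanSpace ℝ (Fin d)) :
    m / 2 * ‖w₁ - w‖ ^ 2 ≤ F w - F w₁ := by
  set c : ℝ := m / 2 * ‖w₁ - w‖ ^ 2 with hc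
  have key : ∀ a ∈ Set.Ioo (0:ℝ) 1, a * c ≤ F w - F w₁ := by
    intro a ha
    obtain ⟨ha0, ha1⟩ := ha
    have hb0 : (0:ℝ) < 1 - a := by linarith
    have hab : a + (1 - a) = 1 := by ring
    have h := hF.2 (Set.mem_univ w₁) (Set.mem_univ w) ha0.le hb0.le hab
    have hmin' := hmin (a • w₁ + (1 - a) • w)
    have h2 : F w₁ ≤ a * F w₁ + (1 - a) * F w - a * (1 - a) * c := by
      have h3 := hmin'.trans h
      simp only [smul_eq_mul] at h3
      convert h3 using 2
    nlinarith [h2]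
  have hne : (Filter.atTop : Filter ℕ).NeBot := inferInstance
  -- take a = 1 - 1/(n+2) → 1
  by_contra hcon
  push_neg at hcon
  -- c > F w - F w₁; but a*c ≤ F w - F w₁ for all a ∈ (0,1), take a close to 1
  have hc0 : 0 < c := by
    by_contra hc0
    push_neg at hc0
    have := key (1/2) (by norm_num)
    nlinarith [hmin w]
  set D := F w - F w₁ with hD
  have hD0 : 0 ≤ D := by simp [hD, sub_nonneg, hmin w]
  have hDc : D < c := hcon
  set a : ℝ := (D + c) / (2 * c) with haa
  have ha01 : a ∈ Set.Ioo (0:ℝ) 1 := by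
    constructor
    · apply div_pos (by linarith) (by linarith)
    · rw [div_lt_one (by linarith)]; linarith
  have := key a ha01
  have heq : a * c = (D + c) / 2 := by
    rw [haa]; field_simp
  rw [heq] at this
  linarith

/-- Any two `μ`-strongly convex, `L`-Lipschitz-on-`B(0,R)` functions have
global minimizers (assumed to lie in `B(0,R)`) at distance at most `2L/μ`; in particular the
`L₂` sensitivity of any function in the class `F_{μ,L,R}` is at most `2L/μ`. -/
theorem stmt_1 (d : ℕ) (hd : 1 ≤ d) (μ L R : ℝ) (hμ : 0 < μ) (hL : 0 < L) (hR : 0 < R)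
    (F₁ F₂ : EuclideanSpace ℝ (Fin d) → ℝ)
    (hF₁cont : Continuous F₁) (hF₂cont : Continuous F₂)
    (hF₁sconv : ConvexOn ℝ Set.univ (fun w => F₁ w - μ / 2 * ‖w‖ ^ 2))
    (hF₂sconv : ConvexOn ℝ Set.univ (fun w => F₂ w - μ / 2 * ‖w‖ ^ 2))
    (hF₁Lip : ∀ w ∈ Metric.closedBall (0 : EuclideanSpace ℝ (Fin d)) R,
      ∀ w' ∈ Metric.closedBall (0 : EuclideanSpace ℝ (Fin d)) R,
      |F₁ w - F₁ w'| ≤ L * ‖w - w'‖)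
    (hF₂Lip : ∀ w ∈ Metric.closedBall (0 : EuclideanSpace ℝ (Fin d)) R,
      ∀ w' ∈ Metric.closedBall (0 : EuclideanSpace ℝ (Fin d)) R,
      |F₂ w - F₂ w'| ≤ L * ‖w - w'‖)
    (w₁ w₂ : EuclideanSpace ℝ (Fin d))
    (hw₁min : ∀ w, F₁ w₁ ≤ F₁ w) (hw₂min : ∀ w, F₂ w₂ ≤ F₂ w)
    (hw₁B : ‖w₁‖ ≤ R) (hw₂B : ‖w₂‖ ≤ R) :
    ‖w₁ - w₂‖ ≤ 2 * L / μ := by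
  have hsc : StrongConvexOn Set.univ μ F₁ := strongConvexOn_iff_convex.mpr hF₁sconv
  have hgap := min_gap_of_strongConvex hsc w₁ hw₁min w₂
  have hw₁b : w₁ ∈ Metric.closedBall (0 : EuclideanSpace ℝ (Fin d)) R := by
    simpa [Metric.mem_closedBall, dist_eq_norm] using hw₁B
  have hw₂b : w₂ ∈ Metric.closedBall (0 : EuclideanSpace ℝ (Fin d)) R := by
    simpa [Metric.mem_closedBall, dist_eq_norm] using hw₂B
  have hlip := hF₁Lip w₂ hw₂b w₁ hw₁b
  have h1 : F₁ w₂ - F₁ w₁ ≤ L * ‖w₂ - w₁‖ := (le_abs_self _).trans hlip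
  rw [show w₂ - w₁ = -(w₁ - w₂) by abel, norm_neg] at h1
  set r := ‖w₁ - w₂‖ with hr
  have hr0 : 0 ≤ r := norm_nonneg _
  have : μ / 2 * r ^ 2 ≤ L * r := hgap.trans h1
  rcases eq_or_lt_of_le hr0 with h | h
  · rw [← h]; positivity
  · rw [le_div_iff₀ hμ]; nlinarith
end

section
/- Let d, n ≥ 1 and μ, L, R > 0, let 𝒳 be a set, and let f : ℝ^d × 𝒳 → ℝ be such that for every x ∈ 𝒳 the function f(·,x) is continuous, μ-strongly convex on ℝ^d, and L-Lipschitz on B(0,R). Let X = (x₁,…,xₙ) and X' = (x₁',…,xₙ') ∈ 𝒳ⁿ be adjacent datasets. If w*(X) minimizes w ↦ (1/n)·Σᵢ₌₁ⁿ f(w,xᵢ) over ℝ^d, w*(X') minimizes w ↦ (1/n)·Σᵢ₌₁ⁿ f(w,xᵢ') over ℝ^d, and both lie in B(0,R), then ‖w*(X) − w*(X')‖₂ ≤ 2L/(μn). -/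
/-- Quadratic growth of a strongly convex function at a global minimizer. -/
lemma growth_at_min {E : Type*} [NormedAddCommGroup E] [InnerProductSpace ℝ E]
    {m : ℝ} (hm : 0 < m) {F : E → ℝ}
    (hconv : ConvexOn ℝ Set.univ (fun x => F x - m / 2 * ‖x‖ ^ 2))
    {w : E} (hmin : ∀ u, F w ≤ F u) (u : E) :
    F w + m / 2 * ‖u - w‖ ^ 2 ≤ F u := by
  have hs : StrongConvexOn Set.univ m F := strongConvexOn_iff_convex.mpr hconv
  set c : ℝ := m / 2 * ‖u - w‖ ^ 2 with hc
  have hc0 : 0 ≤ c := by positivity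
  -- for all b ∈ (0,1], F w ≤ F u - (1-b) * c
  have key : ∀ b : ℝ, 0 < b → b ≤ 1 → F w + c ≤ F u + b * c := by
    intro b hb hb1
    have ha : (0:ℝ) ≤ 1 - b := by linarith
    have h := hs.2 (Set.mem_univ w) (Set.mem_univ u) ha hb.le (by ring)
    have hmin' := hmin ((1 - b) • w + b • u)
    have hnorm : ‖w - u‖ = ‖u - w‖ := norm_sub_rev _ _
    rw [hnorm] at h
    have : F w ≤ (1 - b) * F w + b * F u - (1 - b) * b * c := by
      simpa [smul_eq_mul, hc, mul_assoc] using hmin'.trans h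
    nlinarith
  by_contra hlt
  push_neg at hlt
  have hεpos : 0 < (F w + c - F u) / (c + 1) := div_pos (by linarith) (by linarith)
  obtain ⟨b, hb, hb1, hbc⟩ : ∃ b : ℝ, 0 < b ∧ b ≤ 1 ∧ b * c < F w + c - F u := by
    refine ⟨min 1 ((F w + c - F u) / (c + 1)), lt_min one_pos hεpos, min_le_left _ _, ?_⟩
    calc min 1 ((F w + c - F u) / (c + 1)) * c ≤ (F w + c - F u) / (c + 1) * c := by
          apply mul_le_mul_of_nonneg_right (min_le_right _ _) hc0
      _ < F w + c - F u := by
          rw [div_mul_eq_mul_div, div_lt_iff₀ (by linarith)]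
          nlinarith
  have := key b hb hb1
  linarith

/-- For ERM losses built from per-datum `μ`-strongly convex,
`L`-Lipschitz-on-`B(0,R)` functions, the minimizers on adjacent datasets (assumed to lie
in `B(0,R)`) are at distance at most `2L/(μn)`. -/
theorem stmt_2 (d n : ℕ) (hd : 1 ≤ d) (hn : 1 ≤ n)
    (μ L R : ℝ) (hμ : 0 < μ) (hL : 0 < L) (hR : 0 < R)
    {𝒳 : Type*} (f : EuclideanSpace ℝ (Fin d) → 𝒳 → ℝ)
    (hcont : ∀ x : 𝒳, Continuous (fun w => f w x))
    (hsconv : ∀ x : 𝒳, ConvexOn ℝ Set.univ (fun w => f w x - μ / 2 * ‖w‖ ^ 2))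
    (hLip : ∀ x : 𝒳, ∀ w ∈ Metric.closedBall (0 : EuclideanSpace ℝ (Fin d)) R,
      ∀ w' ∈ Metric.closedBall (0 : EuclideanSpace ℝ (Fin d)) R,
      |f w x - f w' x| ≤ L * ‖w - w'‖)
    (X X' : Fin n → 𝒳) (hadj : ∃ i : Fin n, ∀ j : Fin n, j ≠ i → X j = X' j)
    (w w' : EuclideanSpace ℝ (Fin d))
    (hwmin : ∀ u, (1 / (n : ℝ)) * ∑ i, f w (X i) ≤ (1 / (n : ℝ)) * ∑ i, f u (X i))
    (hw'min : ∀ u, (1 / (n : ℝ)) * ∑ i, f w' (X' i) ≤ (1 / (n : ℝ)) * ∑ i, f u (X' i))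
    (hwB : ‖w‖ ≤ R) (hw'B : ‖w'‖ ≤ R) :
    ‖w - w'‖ ≤ 2 * L / (μ * n) := by
  have hn0 : (0:ℝ) < n := by exact_mod_cast hn
  set F : EuclideanSpace ℝ (Fin d) → ℝ := fun u => ∑ i, f u (X i) with hF
  set F' : EuclideanSpace ℝ (Fin d) → ℝ := fun u => ∑ i, f u (X' i) with hF'
  have hFmin : ∀ u, F w ≤ F u := fun u => by
    have := hwmin u
    have h1n : (0:ℝ) < 1 / n := by positivity
    exact le_of_mul_le_mul_left (by simpa using this) h1n
  have hF'min : ∀ u, F' w' ≤ F' u := fun u => by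
    have := hw'min u
    have h1n : (0:ℝ) < 1 / n := by positivity
    exact le_of_mul_le_mul_left (by simpa using this) h1n
  -- F is (n*μ)-strongly convex
  have hconvsum : ∀ Y : Fin n → 𝒳,
      ConvexOn ℝ Set.univ (fun u : EuclideanSpace ℝ (Fin d) =>
        (∑ i, f u (Y i)) - (n * μ) / 2 * ‖u‖ ^ 2) := by
    intro Y
    have : ConvexOn ℝ Set.univ (fun u : EuclideanSpace ℝ (Fin d) =>
        ∑ i, (f u (Y i) - μ / 2 * ‖u‖ ^ 2)) := by
      classical
      induction (Finset.univ : Finset (Fin n)) using Finset.induction_on with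
      | empty => simpa using convexOn_const 0 convex_univ
      | insert _ _ hnotmem ih =>
        simp only [Finset.sum_insert hnotmem]
        exact (hsconv _).add ih
    convert this using 1
    funext u
    rw [Finset.sum_sub_distrib, Finset.sum_const, Finset.card_univ]
    simp
    ring
  have hnμ : 0 < (n:ℝ) * μ := by positivity
  have g1 := growth_at_min hnμ (hconvsum X) hFmin w'
  have g2 := growth_at_min hnμ (hconvsum X') hF'min w
  -- sum of the two strong convexity inequalities
  obtain ⟨i0, hi0⟩ := hadj
  have hwball : w ∈ Metric.closedBall (0 : EuclideanSpace ℝ (Fin d)) R := by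
    simpa [Metric.mem_closedBall, dist_eq_norm] using hwB
  have hw'ball : w' ∈ Metric.closedBall (0 : EuclideanSpace ℝ (Fin d)) R := by
    simpa [Metric.mem_closedBall, dist_eq_norm] using hw'B
  have hdiff : (F w' - F w) + (F' w - F' w') ≤ 2 * L * ‖w - w'‖ := by
    have hsum : (F w' - F w) + (F' w - F' w')
        = ∑ i, ((f w' (X i) - f w (X i)) + (f w (X' i) - f w' (X' i))) := by
      simp [hF, hF', Finset.sum_add_distrib, Finset.sum_sub_distrib]
    rw [hsum]
    have : ∑ i, ((f w' (X i) - f w (X i)) + (f w (X' i) - f w' (X' i)))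
        = (f w' (X i0) - f w (X i0)) + (f w (X' i0) - f w' (X' i0)) := by
      rw [Fintype.sum_eq_single i0]
      intro j hj
      rw [hi0 j hj]; ring
    rw [this]
    have h1 : |f w' (X i0) - f w (X i0)| ≤ L * ‖w' - w‖ := hLip (X i0) w' hw'ball w hwball
    have h2 : |f w (X' i0) - f w' (X' i0)| ≤ L * ‖w - w'‖ := hLip (X' i0) w hwball w' hw'ball
    have hnorm : ‖w' - w‖ = ‖w - w'‖ := norm_sub_rev _ _
    rw [hnorm] at h1
    have := abs_le.mp h1
    have := abs_le.mp h2
    linarith [(abs_le.mp h1).2, (abs_le.mp h2).2]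
  have hnormsym : ‖w' - w‖ = ‖w - w'‖ := norm_sub_rev _ _
  rw [hnormsym] at g1
  have hquad : (n:ℝ) * μ * ‖w - w'‖ ^ 2 ≤ 2 * L * ‖w - w'‖ := by nlinarith
  rcases eq_or_lt_of_le (norm_nonneg (w - w')) with h0 | h0
  · rw [← h0]; positivity
  · have : (n:ℝ) * μ * ‖w - w'‖ ≤ 2 * L := by
      have := mul_le_mul_of_nonneg_right hquad (le_of_lt (by positivity : (0:ℝ) < (‖w - w'‖)⁻¹))
      calc (n:ℝ) * μ * ‖w - w'‖ = (n:ℝ) * μ * ‖w - w'‖^2 * (‖w - w'‖)⁻¹ := by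
            field_simp
        _ ≤ 2 * L * ‖w - w'‖ * (‖w - w'‖)⁻¹ := this
        _ = 2 * L := by field_simp
    rw [le_div_iff₀ (by positivity)]
    nlinarith
end

section
/- Let d, n ≥ 1 and μ, L, R > 0. For w, x ∈ ℝ^d define f(w,x) = (μ/4)‖w‖₂² + (L/4)⟨x,w⟩, and for X = (x₁,…,xₙ) ∈ ℝ^{d×n} define F(w,X) = (1/n)·Σᵢ₌₁ⁿ f(w,xᵢ). Then: (i) for every x ∈ B(0,1), f(·,x) is (μ/2)-strongly convex on ℝ^d, and if L ≥ μR it is L-Lipschitz on B(0,R); (ii) for every X ∈ B(0,1)ⁿ, F(·,X) has the unique global minimizer w*(X) = −(L/(2μn))·Σᵢ₌₁ⁿ xᵢ, which lies in B(0,R) whenever R ≥ L/(2μ); (iii) for the adjacent datasets X = (0,…,0,e₁) and X' = (0,…,0,−e₁), where e₁ is the first standard basis vector, one has ‖w*(X) − w*(X')‖₂ = L/(μn). Hence the O(L/(μn)) sensitivity bound for strongly convex Lipschitz empirical risk minimization is tight up to a constant factor. -/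
open scoped RealInnerProductSpace

set_option maxHeartbeats 1000000 in
/-- For the hard instance `f(w,x) = (μ/4)‖w‖² + (L/4)⟨x,w⟩`:
(i) `f(·,x)` is `(μ/2)`-strongly convex, and `L`-Lipschitz on `B(0,R)` when `L ≥ μR`;
(ii) the ERM objective has unique global minimizer `w*(X) = −(L/(2μn))·Σᵢ xᵢ`, which lies in
`B(0,R)` when `R ≥ L/(2μ)`;
(iii) for the adjacent datasets `X = (0,…,0,e₁)` and `X' = (0,…,0,−e₁)` one has
`‖w*(X) − w*(X')‖ = L/(μn)`. -/
theorem stmt_4 (d n : ℕ) (hd : 1 ≤ d) (hn : 1 ≤ n)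
    (μ L R : ℝ) (hμ : 0 < μ) (hL : 0 < L) (hR : 0 < R)
    (f : EuclideanSpace ℝ (Fin d) → EuclideanSpace ℝ (Fin d) → ℝ)
    (hf : ∀ w x, f w x = μ / 4 * ‖w‖ ^ 2 + L / 4 * ⟪x, w⟫)
    (F : EuclideanSpace ℝ (Fin d) → (Fin n → EuclideanSpace ℝ (Fin d)) → ℝ)
    (hF : ∀ w X, F w X = (1 / (n : ℝ)) * ∑ i, f w (X i))
    (e₁ : EuclideanSpace ℝ (Fin d)) (he₁ : e₁ = EuclideanSpace.single (⟨0, hd⟩ : Fin d) 1)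
    (X X' : Fin n → EuclideanSpace ℝ (Fin d))
    (hX : X = Function.update (fun _ => (0 : EuclideanSpace ℝ (Fin d)))
      (⟨n - 1, by omega⟩ : Fin n) e₁)
    (hX' : X' = Function.update (fun _ => (0 : EuclideanSpace ℝ (Fin d)))
      (⟨n - 1, by omega⟩ : Fin n) (-e₁)) :
    -- (i)
    ((∀ x : EuclideanSpace ℝ (Fin d), ‖x‖ ≤ 1 →
        ConvexOn ℝ Set.univ (fun w => f w x - (μ / 2) / 2 * ‖w‖ ^ 2)) ∧
      (μ * R ≤ L → ∀ x : EuclideanSpace ℝ (Fin d), ‖x‖ ≤ 1 →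
        ∀ w ∈ Metric.closedBall (0 : EuclideanSpace ℝ (Fin d)) R,
        ∀ w' ∈ Metric.closedBall (0 : EuclideanSpace ℝ (Fin d)) R,
        |f w x - f w' x| ≤ L * ‖w - w'‖)) ∧
    -- (ii)
    (∀ Y : Fin n → EuclideanSpace ℝ (Fin d), (∀ i, ‖Y i‖ ≤ 1) →
      (∀ u, F (-(L / (2 * μ * n)) • ∑ i, Y i) Y ≤ F u Y) ∧
      (∀ w, (∀ u, F w Y ≤ F u Y) → w = -(L / (2 * μ * n)) • ∑ i, Y i) ∧
      (L / (2 * μ) ≤ R → ‖-(L / (2 * μ * n)) • ∑ i, Y i‖ ≤ R)) ∧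
    -- (iii)
    (∀ w w' : EuclideanSpace ℝ (Fin d),
      (∀ u, F w X ≤ F u X) → (∀ u, F w' X' ≤ F u X') →
      ‖w - w'‖ = L / (μ * n)) := by
  
  have hn0 : (0:ℝ) < n := by exact_mod_cast hn
  -- a closed form for F
  have hFval : ∀ (Y : Fin n → EuclideanSpace ℝ (Fin d)) (u : EuclideanSpace ℝ (Fin d)),
      F u Y = μ/4 * ‖u‖^2 + L/(4*n) * ⟪∑ i, Y i, u⟫ := by
    intro Y u
    rw [hF]
    simp only [hf]
    rw [Finset.sum_add_distrib, Finset.sum_const, ← Finset.mul_sum, ← sum_inner,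
      Finset.card_univ, Fintype.card_fin, nsmul_eq_mul]
    field_simp
  -- quadratic identity
  have hquad : ∀ (Y : Fin n → EuclideanSpace ℝ (Fin d)) (u : EuclideanSpace ℝ (Fin d)),
      F u Y = μ/4 * ‖u - (-(L / (2 * μ * n)) • ∑ i, Y i)‖^2
        - μ/4 * ‖(-(L / (2 * μ * n)) • ∑ i, Y i : EuclideanSpace ℝ (Fin d))‖^2 := by
    intro Y u
    rw [hFval]
    set s : EuclideanSpace ℝ (Fin d) := ∑ i, Y i with hs
    have h1 : ‖u - (-(L / (2 * μ * n)) • s)‖^2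
        = ‖u‖^2 - 2 * ⟪u, (-(L / (2 * μ * n)) • s : EuclideanSpace ℝ (Fin d))⟫
          + ‖(-(L / (2 * μ * n)) • s : EuclideanSpace ℝ (Fin d))‖^2 :=
      norm_sub_sq_real u _
    have h2 : ⟪u, (-(L / (2 * μ * n)) • s : EuclideanSpace ℝ (Fin d))⟫
        = -(L / (2 * μ * n)) * ⟪s, u⟫ := by
      rw [real_inner_smul_right, real_inner_comm]
    rw [h1, h2]
    field_simp
    ring
  have hmin : ∀ (Y : Fin n → EuclideanSpace ℝ (Fin d)) (u : EuclideanSpace ℝ (Fin d)),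
      F (-(L / (2 * μ * n)) • ∑ i, Y i) Y ≤ F u Y := by
    intro Y u
    rw [hquad, hquad]
    have h0 : (0:ℝ) ≤ ‖u - (-(L / (2 * μ * n)) • ∑ i, Y i)‖^2 := sq_nonneg _
    simp only [sub_self, norm_zero]
    nlinarith
  have huniq : ∀ (Y : Fin n → EuclideanSpace ℝ (Fin d)) (w : EuclideanSpace ℝ (Fin d)),
      (∀ u, F w Y ≤ F u Y) → w = -(L / (2 * μ * n)) • ∑ i, Y i := by
    intro Y w hw
    have h := hw (-(L / (2 * μ * n)) • ∑ i, Y i)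
    rw [hquad, hquad] at h
    simp only [sub_self, norm_zero] at h
    have h2 : ‖w - (-(L / (2 * μ * n)) • ∑ i, Y i)‖^2 ≤ 0 := by nlinarith
    have h3 : ‖w - (-(L / (2 * μ * n)) • ∑ i, Y i)‖ = 0 := by nlinarith [sq_nonneg ‖w - (-(L / (2 * μ * n)) • ∑ i, Y i)‖, norm_nonneg (w - (-(L / (2 * μ * n)) • ∑ i, Y i))]
    rw [norm_eq_zero, sub_eq_zero] at h3
    exact h3
  refine ⟨⟨?_, ?_⟩, ?_, ?_⟩
  · -- convexity
    intro x hx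
    have heq : (fun w => f w x - (μ / 2) / 2 * ‖w‖ ^ 2)
        = fun w : EuclideanSpace ℝ (Fin d) => L / 4 * ⟪x, w⟫ := by
      funext w; rw [hf]; ring
    rw [heq]
    refine ⟨convex_univ, ?_⟩
    intro w _ w' _ a b _ _ _
    apply le_of_eq
    simp only [inner_add_right, real_inner_smul_right, smul_eq_mul]
    ring
  · -- Lipschitz
    intro hLR x hx w hw w' hw'
    rw [Metric.mem_closedBall, dist_zero_right] at hw hw'
    have hdiff : f w x - f w' x
        = μ/4 * (‖w‖^2 - ‖w'‖^2) + L/4 * ⟪x, w - w'⟫ := by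
      rw [hf, hf, inner_sub_right (𝕜 := ℝ)]; ring
    have h1a : |⟪x, w - w'⟫| ≤ ‖x‖ * ‖w - w'‖ := abs_real_inner_le_norm x _
    have h1b : ‖x‖ * ‖w - w'‖ ≤ 1 * ‖w - w'‖ :=
      mul_le_mul_of_nonneg_right hx (norm_nonneg _)
    have h1 : |⟪x, w - w'⟫| ≤ ‖w - w'‖ := by linarith [h1a, h1b]
    have hnn : |‖w‖ - ‖w'‖| ≤ ‖w - w'‖ := abs_norm_sub_norm_le w w'
    have h2 : |‖w‖^2 - ‖w'‖^2| ≤ 2 * R * ‖w - w'‖ := by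
      have heq2 : ‖w‖^2 - ‖w'‖^2 = (‖w‖ + ‖w'‖) * (‖w‖ - ‖w'‖) := by ring
      rw [heq2, abs_mul]
      have hsum : |‖w‖ + ‖w'‖| ≤ 2 * R := by
        rw [abs_of_nonneg (by positivity)]; linarith
      exact mul_le_mul hsum hnn (abs_nonneg _) (by positivity)
    rw [hdiff]
    have habs := abs_add_le (μ/4 * (‖w‖^2 - ‖w'‖^2)) (L/4 * ⟪x, w - w'⟫)
    rw [abs_mul, abs_mul, abs_of_nonneg (by positivity : (0:ℝ) ≤ μ/4),
      abs_of_nonneg (by positivity : (0:ℝ) ≤ L/4)] at habs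
    have p1 : μ/4 * |‖w‖^2 - ‖w'‖^2| ≤ μ/4 * (2 * R * ‖w - w'‖) :=
      mul_le_mul_of_nonneg_left h2 (by positivity)
    have p2 : L/4 * |⟪x, w - w'⟫| ≤ L/4 * ‖w - w'‖ :=
      mul_le_mul_of_nonneg_left h1 (by positivity)
    have p3 : (μ * R) * ‖w - w'‖ ≤ L * ‖w - w'‖ :=
      mul_le_mul_of_nonneg_right hLR (norm_nonneg _)
    have p4 : (0:ℝ) ≤ L * ‖w - w'‖ := by positivity
    linarith [habs, p1, p2, p3, p4]
  · -- (ii)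
    intro Y hY
    refine ⟨hmin Y, huniq Y, ?_⟩
    intro hRb
    rw [norm_smul]
    have hc : ‖(-(L / (2 * μ * n)) : ℝ)‖ = L / (2 * μ * n) := by
      rw [Real.norm_eq_abs, abs_neg, abs_of_nonneg (by positivity)]
    have hsum : ‖∑ i, Y i‖ ≤ n := by
      calc ‖∑ i, Y i‖ ≤ ∑ i, ‖Y i‖ := norm_sum_le _ _
        _ ≤ ∑ _i : Fin n, (1:ℝ) := Finset.sum_le_sum fun i _ => hY i
        _ = n := by simp
    rw [hc]
    calc L / (2 * μ * n) * ‖∑ i, Y i‖ ≤ L / (2 * μ * n) * n := by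
          apply mul_le_mul_of_nonneg_left hsum (by positivity)
      _ = L / (2 * μ) := by field_simp
      _ ≤ R := hRb
  · -- (iii)
    intro w w' hwmin hw'min
    have hj : (⟨n - 1, by omega⟩ : Fin n) = ⟨n - 1, by omega⟩ := rfl
    have he₁norm : ‖e₁‖ = 1 := by
      rw [he₁, EuclideanSpace.norm_single]; norm_num
    have hsX : ∑ i, X i = e₁ := by
      rw [hX]
      rw [Finset.sum_eq_single (⟨n - 1, by omega⟩ : Fin n)]
      · simp
      · intro i _ hi; simp [Function.update_of_ne hi]
      · simp
    have hsX' : ∑ i, X' i = -e₁ := by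
      rw [hX']
      rw [Finset.sum_eq_single (⟨n - 1, by omega⟩ : Fin n)]
      · simp
      · intro i _ hi; simp [Function.update_of_ne hi]
      · simp
    have hw1 : w = -(L / (2 * μ * n)) • e₁ := by
      have := huniq X w hwmin; rwa [hsX] at this
    have hw2 : w' = (L / (2 * μ * n)) • e₁ := by
      have := huniq X' w' hw'min; rw [hsX'] at this
      rw [this, smul_neg, neg_smul, neg_neg]
    rw [hw1, hw2, ← sub_smul, norm_smul, he₁norm, mul_one, Real.norm_eq_abs]
    have : -(L / (2 * μ * n)) - L / (2 * μ * n) = -(L / (μ * n)) := by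
      field_simp; ring
    rw [this, abs_neg, abs_of_nonneg (by positivity)]
end

section
/- Let d ≥ 1, ε > 0, Δ > 0, and let a, b ∈ ℝ^d with ‖a − b‖₂ ≤ Δ. Then for every Lebesgue-measurable set K ⊆ ℝ^d, ∫_K exp(−(ε/Δ)‖t − a‖₂) dt ≤ e^ε · ∫_K exp(−(ε/Δ)‖t − b‖₂) dt. Consequently, adding to a query output with L₂ sensitivity Δ a random vector z whose density is proportional to exp(−(ε/Δ)‖t‖₂) yields an (ε,0)-differentially private mechanism: the laws of a + z and b + z satisfy P(a + z ∈ K) ≤ e^ε · P(b + z ∈ K) for every measurable K. -/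
open MeasureTheory

lemma aux_exp_integrable (d : ℕ) {c : ℝ} (hc : 0 < c) :
    Integrable (fun t : EuclideanSpace ℝ (Fin d) => Real.exp (-c * ‖t‖)) := by
  set n : ℕ := d + 1 with hn'
  set s : ℝ := min 1 (c / n) with hs'
  have hn : (0:ℝ) < n := by positivity
  have hs : 0 < s := lt_min one_pos (by positivity)
  have key : ∀ t : ℝ, 0 ≤ t → Real.exp (-c * t) ≤ s⁻¹ ^ n * ((1 + t) ^ n)⁻¹ := by
    intro t ht
    have h1 : s * (1 + t) ≤ 1 + (c / n) * t := by
      have h1a : s ≤ 1 := min_le_left _ _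
      have h1b : s ≤ c / n := min_le_right _ _
      nlinarith
    have h3 : 1 + (c / n) * t ≤ Real.exp ((c / n) * t) := by
      have := Real.add_one_le_exp ((c / n) * t)
      linarith
    have h2 : (1 + (c / n) * t) ^ n ≤ Real.exp (c * t) := by
      have hposb : (0:ℝ) ≤ 1 + (c / n) * t := by positivity
      calc (1 + (c / n) * t) ^ n ≤ Real.exp ((c / n) * t) ^ n :=
            pow_le_pow_left₀ hposb h3 n
        _ = Real.exp ((n : ℝ) * ((c / n) * t)) := (Real.exp_nat_mul _ n).symm
        _ = Real.exp (c * t) := by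
            congr 1
            field_simp
    have h4 : (s * (1 + t)) ^ n ≤ Real.exp (c * t) := by
      refine le_trans (pow_le_pow_left₀ (by positivity) h1 n) h2
    have h5 : (Real.exp (c * t))⁻¹ ≤ ((s * (1 + t)) ^ n)⁻¹ := by
      apply inv_anti₀ (by positivity) h4
    calc Real.exp (-c * t) = (Real.exp (c * t))⁻¹ := by
          rw [← Real.exp_neg]; ring_nf
      _ ≤ ((s * (1 + t)) ^ n)⁻¹ := h5
      _ = s⁻¹ ^ n * ((1 + t) ^ n)⁻¹ := by
          rw [mul_pow, mul_inv, inv_pow]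
  have hfin : (Module.finrank ℝ (EuclideanSpace ℝ (Fin d)) : ℝ) < (n : ℝ) := by
    rw [finrank_euclideanSpace_fin]
    exact_mod_cast Nat.lt_succ_self d
  have hint : Integrable
      (fun x : EuclideanSpace ℝ (Fin d) => s⁻¹ ^ n * (1 + ‖x‖) ^ (-(n : ℝ))) :=
    (integrable_one_add_norm hfin).const_mul _
  refine hint.mono' ?_ ?_
  · exact (Real.continuous_exp.comp (continuous_const.mul continuous_norm)).aestronglyMeasurable
  · refine Filter.Eventually.of_forall fun x => ?_
    have h0 : (0:ℝ) < 1 + ‖x‖ := by positivity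
    rw [Real.norm_eq_abs, abs_of_pos (Real.exp_pos _), Real.rpow_neg h0.le,
      Real.rpow_natCast]
    exact key ‖x‖ (norm_nonneg x)

/-- The Laplace-type mechanism with density proportional to
`exp(−(ε/Δ)‖t‖)` is `(ε,0)`-differentially private: for `‖a − b‖ ≤ Δ` and every measurable
set `K`, `∫_K exp(−(ε/Δ)‖t−a‖) dt ≤ e^ε ∫_K exp(−(ε/Δ)‖t−b‖) dt`, and hence the normalized
output distributions satisfy the same `e^ε` multiplicative bound. -/
theorem stmt_5 (d : ℕ) (hd : 1 ≤ d) (ε Δ : ℝ) (hε : 0 < ε) (hΔ : 0 < Δ)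
    (a b : EuclideanSpace ℝ (Fin d)) (hab : ‖a - b‖ ≤ Δ) :
    (∀ K : Set (EuclideanSpace ℝ (Fin d)), MeasurableSet K →
      ∫ t in K, Real.exp (-(ε / Δ) * ‖t - a‖) ≤
        Real.exp ε * ∫ t in K, Real.exp (-(ε / Δ) * ‖t - b‖)) ∧
    (∀ K : Set (EuclideanSpace ℝ (Fin d)), MeasurableSet K →
      (∫ t in K, Real.exp (-(ε / Δ) * ‖t - a‖)) /
          (∫ t : EuclideanSpace ℝ (Fin d), Real.exp (-(ε / Δ) * ‖t‖)) ≤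
        Real.exp ε * ((∫ t in K, Real.exp (-(ε / Δ) * ‖t - b‖)) /
          (∫ t : EuclideanSpace ℝ (Fin d), Real.exp (-(ε / Δ) * ‖t‖)))) := by
  have hc : 0 < ε / Δ := div_pos hε hΔ
  have hint := aux_exp_integrable d hc
  have hinta : Integrable (fun t : EuclideanSpace ℝ (Fin d) =>
      Real.exp (-(ε / Δ) * ‖t - a‖)) := hint.comp_sub_right a
  have hintb : Integrable (fun t : EuclideanSpace ℝ (Fin d) =>
      Real.exp (-(ε / Δ) * ‖t - b‖)) := hint.comp_sub_right b
  have hpt : ∀ t : EuclideanSpace ℝ (Fin d),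
      Real.exp (-(ε / Δ) * ‖t - a‖) ≤ Real.exp ε * Real.exp (-(ε / Δ) * ‖t - b‖) := by
    intro t
    rw [← Real.exp_add]
    apply Real.exp_le_exp.2
    have h1 : ‖t - b‖ ≤ ‖t - a‖ + ‖a - b‖ := norm_sub_le_norm_sub_add_norm_sub t a b
    have h2 : ε / Δ * Δ = ε := div_mul_cancel₀ ε hΔ.ne'
    nlinarith [norm_nonneg (t - a), norm_nonneg (a - b)]
  have part1 : ∀ K : Set (EuclideanSpace ℝ (Fin d)), MeasurableSet K →
      ∫ t in K, Real.exp (-(ε / Δ) * ‖t - a‖) ≤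
        Real.exp ε * ∫ t in K, Real.exp (-(ε / Δ) * ‖t - b‖) := by
    intro K hK
    rw [← integral_const_mul]
    exact setIntegral_mono_on hinta.integrableOn
      ((hintb.const_mul (Real.exp ε)).integrableOn) hK (fun t _ => hpt t)
  refine ⟨part1, fun K hK => ?_⟩
  have h1 := part1 K hK
  set Z := ∫ t : EuclideanSpace ℝ (Fin d), Real.exp (-(ε / Δ) * ‖t‖) with hZ'
  have hZ : 0 ≤ Z := integral_nonneg fun _ => (Real.exp_pos _).le
  rcases hZ.eq_or_lt with h | h
  · rw [← h, div_zero, div_zero, mul_zero]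
  · rw [← mul_div_assoc]
    gcongr
end

section
/- Let d ≥ 1 and ε, Δ, L, R > 0. Let F : ℝ^d → ℝ be L-Lipschitz on B(0,R), let w* ∈ B(0,R), let Π_{B(0,R)} denote the Euclidean projection onto B(0,R), and let ν be the probability measure on ℝ^d whose density with respect to Lebesgue measure is proportional to exp(−(ε/Δ)‖t‖₂). Then ∫_{ℝ^d} F(Π_{B(0,R)}(w* + z)) dν(z) − F(w*) ≤ L·Δ·d/ε. -/
open MeasureTheory
open scoped ENNReal NNReal

/-- Euclidean projection onto the closed ball `B(0,R)`:
`Π(u) = u` if `‖u‖ ≤ R`, and `Π(u) = (R/‖u‖)·u` otherwise. -/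
noncomputable def projBall {d : ℕ} (R : ℝ) (u : EuclideanSpace ℝ (Fin d)) :
    EuclideanSpace ℝ (Fin d) :=
  if ‖u‖ ≤ R then u else (R / ‖u‖) • u

section Aux

open Real Set
open scoped RealInnerProductSpace

variable {d : ℕ}

lemma projBall_norm_le {R : ℝ} (hR : 0 < R) (u : EuclideanSpace ℝ (Fin d)) :
    ‖projBall R u‖ ≤ R := by
  unfold projBall
  split_ifs with h
  · exact h
  · push_neg at h
    have hu : ‖u‖ ≠ 0 := (hR.trans h).ne'
    rw [norm_smul, Real.norm_eq_abs, abs_of_pos (div_pos hR (hR.trans h)),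
      div_mul_cancel₀ _ hu]

lemma projBall_dist_le {R : ℝ} (hR : 0 < R) {w : EuclideanSpace ℝ (Fin d)}
    (hw : ‖w‖ ≤ R) (u : EuclideanSpace ℝ (Fin d)) :
    ‖projBall R u - w‖ ≤ ‖u - w‖ := by
  unfold projBall
  split_ifs with h
  · exact le_rfl
  · push_neg at h
    have hs : (0:ℝ) < ‖u‖ := hR.trans h
    have hip : (inner ℝ u w : ℝ) ≤ ‖u‖ * ‖w‖ := real_inner_le_norm u w
    have h1 : ‖(R / ‖u‖) • u‖ = R := by
      rw [norm_smul, Real.norm_eq_abs, abs_of_pos (div_pos hR hs), div_mul_cancel₀ _ hs.ne']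
    have h2 : (inner ℝ ((R / ‖u‖) • u) w : ℝ) = (R / ‖u‖) * (inner ℝ u w : ℝ) := real_inner_smul_left u w _
    have key : ‖(R / ‖u‖) • u - w‖ ^ 2 ≤ ‖u - w‖ ^ 2 := by
      rw [norm_sub_sq_real, norm_sub_sq_real, h1, h2]
      have hq1 : R / ‖u‖ ≤ 1 := (div_le_one hs).2 h.le
      have hq0 : 0 ≤ R / ‖u‖ := (div_pos hR hs).le
      have hqs : (R / ‖u‖) * ‖u‖ = R := div_mul_cancel₀ _ hs.ne'
      nlinarith [mul_le_mul_of_nonneg_left hip (sub_nonneg.2 hq1),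
        mul_le_mul_of_nonneg_left hw hs.le, sq_nonneg (‖u‖ - R)]
    have := Real.sqrt_le_sqrt key
    rwa [Real.sqrt_sq (norm_nonneg _), Real.sqrt_sq (norm_nonneg _)] at this

lemma projBall_continuous {R : ℝ} (hR : 0 < R) :
    Continuous (projBall (d := d) R) := by
  rw [continuous_iff_continuousAt]
  intro u
  rcases le_or_gt ‖u‖ R with hu | hu
  · rw [Metric.continuousAt_iff]
    intro ε hε
    refine ⟨ε, hε, fun {v} hv => ?_⟩
    have h0 : projBall R u = u := if_pos hu
    rw [dist_eq_norm, h0]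
    calc ‖projBall R v - u‖ ≤ ‖v - u‖ := projBall_dist_le hR hu v
      _ < ε := by rwa [← dist_eq_norm]
  · have hne : ‖u‖ ≠ 0 := (hR.trans hu).ne'
    have hca : ContinuousAt (fun v : EuclideanSpace ℝ (Fin d) => (R / ‖v‖) • v) u :=
      (continuousAt_const.div continuous_norm.continuousAt hne).smul continuousAt_id
    apply hca.congr
    have hmem : {v : EuclideanSpace ℝ (Fin d) | R < ‖v‖} ∈ nhds u :=
      (isOpen_lt continuous_const continuous_norm).mem_nhds hu
    filter_upwards [hmem] with v hv
    exact (if_neg (not_le.2 hv)).symm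

lemma integral_norm_pow_exp (d k : ℕ) (hd : 1 ≤ d) {a : ℝ} (ha : 0 < a) :
    ∫ z : EuclideanSpace ℝ (Fin d), Real.exp (-(a * ‖z‖)) * ‖z‖ ^ k
      = ((d : ℝ) * (volume (Metric.ball (0 : EuclideanSpace ℝ (Fin d)) 1)).toReal)
        * ((1 / a) ^ (d + k) * Real.Gamma (d + k)) := by
  have hnt : Nontrivial (EuclideanSpace ℝ (Fin d)) := by
    have : 0 < Module.finrank ℝ (EuclideanSpace ℝ (Fin d)) := by
      rw [finrank_euclideanSpace_fin]; omega
    exact Module.nontrivial_of_finrank_pos this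
  have hdim : Module.finrank ℝ (EuclideanSpace ℝ (Fin d)) = d := finrank_euclideanSpace_fin
  have h := integral_fun_norm_addHaar (volume : Measure (EuclideanSpace ℝ (Fin d)))
    (fun t : ℝ => Real.exp (-(a * t)) * t ^ k)
  rw [hdim] at h
  rw [h]
  have hinner : ∫ y in Ioi (0:ℝ), y ^ (d - 1) • (Real.exp (-(a * y)) * y ^ k)
      = (1 / a) ^ ((d + k : ℕ) : ℝ) * Real.Gamma ((d + k : ℕ) : ℝ) := by
    rw [← integral_rpow_mul_exp_neg_mul_Ioi (by positivity : (0:ℝ) < ((d + k : ℕ) : ℝ)) ha]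
    refine setIntegral_congr_fun measurableSet_Ioi (fun y hy => ?_)
    have hy0 : (0:ℝ) < y := hy
    have hcast : ((d + k : ℕ) : ℝ) - 1 = ((d - 1 + k : ℕ) : ℝ) := by
      have : d - 1 + k + 1 = d + k := by omega
      have := congrArg (fun n : ℕ => (n : ℝ)) this
      push_cast at this ⊢
      linarith
    rw [smul_eq_mul, hcast, Real.rpow_natCast]
    ring
  rw [hinner, Real.rpow_natCast, nsmul_eq_mul, smul_eq_mul]
  push_cast
  simp only [measureReal_def]
  ring

end Aux

/-- For `F` `L`-Lipschitz on `B(0,R)`, `w* ∈ B(0,R)`, and `ν` the probability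
measure with density proportional to `exp(−(ε/Δ)‖t‖)`, the projected output-perturbation
excess risk satisfies `∫ F(Π(w* + z)) dν(z) − F(w*) ≤ LΔd/ε`. -/
theorem stmt_7 (d : ℕ) (hd : 1 ≤ d) (ε Δ L R : ℝ)
    (hε : 0 < ε) (hΔ : 0 < Δ) (hL : 0 < L) (hR : 0 < R)
    (F : EuclideanSpace ℝ (Fin d) → ℝ)
    (hLip : ∀ w ∈ Metric.closedBall (0 : EuclideanSpace ℝ (Fin d)) R,
      ∀ w' ∈ Metric.closedBall (0 : EuclideanSpace ℝ (Fin d)) R,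
      |F w - F w'| ≤ L * ‖w - w'‖)
    (wstar : EuclideanSpace ℝ (Fin d)) (hws : ‖wstar‖ ≤ R)
    (c : ℝ) (hc : 0 < c)
    (ν : Measure (EuclideanSpace ℝ (Fin d)))
    (hν : ν = volume.withDensity
      (fun t => ENNReal.ofReal (c * Real.exp (-(ε / Δ) * ‖t‖))))
    (hprob : IsProbabilityMeasure ν) :
    (∫ z, F (projBall R (wstar + z)) ∂ν) - F wstar ≤ L * Δ * d / ε := by
  set a : ℝ := ε / Δ with ha_def
  have ha : 0 < a := div_pos hε hΔ
  have hν' : ν = volume.withDensity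
      (fun t => ((c * Real.exp (-(a * ‖t‖))).toNNReal : ℝ≥0∞)) := by
    rw [hν]; congr 1; funext t; simp only [ENNReal.ofReal, neg_mul]
  have hgm : Measurable fun t : EuclideanSpace ℝ (Fin d) =>
      (c * Real.exp (-(a * ‖t‖))).toNNReal := by fun_prop
  have hconv : ∀ f : EuclideanSpace ℝ (Fin d) → ℝ,
      ∫ z, f z ∂ν = ∫ z, (c * Real.exp (-(a * ‖z‖))) * f z := by
    intro f
    rw [hν', integral_withDensity_eq_integral_smul hgm f]
    refine integral_congr_ae (Filter.Eventually.of_forall fun z => ?_)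
    show ((c * Real.exp (-(a * ‖z‖))).toNNReal : ℝ≥0) • f z = c * Real.exp (-(a * ‖z‖)) * f z
    rw [NNReal.smul_def, Real.coe_toNNReal _ (by positivity), smul_eq_mul]
  -- integrability of the norm against `ν`
  have hIntMul : Integrable
      (fun z : EuclideanSpace ℝ (Fin d) => (c * Real.exp (-(a * ‖z‖))) * ‖z‖) volume := by
    set C0 : ℝ := c * (1 + ((d : ℝ) + 2) / a) ^ (d + 2) with hC0
    have hbig : Integrable
        (fun z : EuclideanSpace ℝ (Fin d) => C0 * (1 + ‖z‖) ^ (-((d : ℝ) + 1))) volume := by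
      refine Integrable.const_mul ?_ C0
      refine integrable_one_add_norm ?_
      rw [finrank_euclideanSpace_fin]
      linarith
    refine hbig.mono'
      ((Continuous.aestronglyMeasurable (by fun_prop :
        Continuous fun z : EuclideanSpace ℝ (Fin d) => c * Real.exp (-(a * ‖z‖)) * ‖z‖)))
      (Filter.Eventually.of_forall fun z => ?_)
    have ht : (0:ℝ) ≤ ‖z‖ := norm_nonneg z
    set t : ℝ := ‖z‖ with htdef
    have h1t : (0:ℝ) < 1 + t := by linarith
    have hrp : (1 + t) ^ (-((d : ℝ) + 1)) = ((1 + t) ^ (d + 1 : ℕ))⁻¹ := by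
      rw [← Real.rpow_natCast (1 + t) (d + 1), ← Real.rpow_neg h1t.le]
      push_cast; ring_nf
    have hM : 1 + t ≤ (1 + ((d : ℝ) + 2) / a) * Real.exp (a * t / ((d : ℝ) + 2)) := by
      have hs : a * t / ((d : ℝ) + 2) ≤ Real.exp (a * t / ((d : ℝ) + 2)) := by
        linarith [Real.add_one_le_exp (a * t / ((d : ℝ) + 2))]
      have h1 : (1:ℝ) ≤ Real.exp (a * t / ((d : ℝ) + 2)) := Real.one_le_exp (by positivity)
      have ht' : t = ((d : ℝ) + 2) / a * (a * t / ((d : ℝ) + 2)) := by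
        field_simp
      calc 1 + t = 1 + ((d : ℝ) + 2) / a * (a * t / ((d : ℝ) + 2)) := by rw [← ht']
        _ ≤ Real.exp (a * t / ((d : ℝ) + 2))
            + ((d : ℝ) + 2) / a * Real.exp (a * t / ((d : ℝ) + 2)) :=
          add_le_add h1 (mul_le_mul_of_nonneg_left hs (by positivity))
        _ = (1 + ((d : ℝ) + 2) / a) * Real.exp (a * t / ((d : ℝ) + 2)) := by ring
    have hpow : (1 + t) ^ (d + 2) ≤ (1 + ((d : ℝ) + 2) / a) ^ (d + 2) * Real.exp (a * t) := by
      calc (1 + t) ^ (d + 2)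
          ≤ ((1 + ((d : ℝ) + 2) / a) * Real.exp (a * t / ((d : ℝ) + 2))) ^ (d + 2) :=
            pow_le_pow_left₀ h1t.le hM _
        _ = (1 + ((d : ℝ) + 2) / a) ^ (d + 2) * Real.exp (a * t / ((d : ℝ) + 2)) ^ (d + 2) :=
            mul_pow _ _ _
        _ = (1 + ((d : ℝ) + 2) / a) ^ (d + 2) * Real.exp (a * t) := by
            rw [← Real.exp_nat_mul]; congr 2; push_cast; field_simp
    have hnn : (0:ℝ) ≤ c * Real.exp (-(a * t)) * t := by positivity
    rw [Real.norm_eq_abs, abs_of_nonneg hnn, hrp, ← div_eq_mul_inv, le_div_iff₀ (by positivity)]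
    have hstep : c * Real.exp (-(a * t)) * t * (1 + t) ^ (d + 1)
        ≤ c * Real.exp (-(a * t)) * (1 + t) ^ (d + 2) := by
      have : t * (1 + t) ^ (d + 1) ≤ (1 + t) ^ (d + 2) := by
        rw [pow_succ]
        calc t * (1 + t) ^ (d + 1) = (1 + t) ^ (d + 1) * t := by ring
          _ ≤ (1 + t) ^ (d + 1) * (1 + t) := by
            exact mul_le_mul_of_nonneg_left (by linarith) (by positivity)
      calc c * Real.exp (-(a * t)) * t * (1 + t) ^ (d + 1)
          = (c * Real.exp (-(a * t))) * (t * (1 + t) ^ (d + 1)) := by ring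
        _ ≤ (c * Real.exp (-(a * t))) * (1 + t) ^ (d + 2) :=
            mul_le_mul_of_nonneg_left this (by positivity)
        _ = c * Real.exp (-(a * t)) * (1 + t) ^ (d + 2) := by ring
    refine hstep.trans ?_
    calc c * Real.exp (-(a * t)) * (1 + t) ^ (d + 2)
        ≤ c * Real.exp (-(a * t)) * ((1 + ((d : ℝ) + 2) / a) ^ (d + 2) * Real.exp (a * t)) :=
          mul_le_mul_of_nonneg_left hpow (by positivity)
      _ = C0 * (Real.exp (-(a * t)) * Real.exp (a * t)) := by rw [hC0]; ring
      _ = C0 := by rw [← Real.exp_add]; simp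
  have hIntNormν : Integrable (fun z : EuclideanSpace ℝ (Fin d) => ‖z‖) ν := by
    rw [hν', integrable_withDensity_iff_integrable_smul hgm]
    refine hIntMul.congr (Filter.Eventually.of_forall fun z => ?_)
    show c * Real.exp (-(a * ‖z‖)) * ‖z‖ = ((c * Real.exp (-(a * ‖z‖))).toNNReal : ℝ≥0) • ‖z‖
    rw [NNReal.smul_def, Real.coe_toNNReal _ (by positivity), smul_eq_mul]
  -- the value of the first moment
  have hval : ∫ z, ‖z‖ ∂ν = Δ * d / ε := by
    have hK := integral_norm_pow_exp d 0 hd ha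
    have hK1 := integral_norm_pow_exp d 1 hd ha
    simp only [pow_zero, mul_one, pow_one, Nat.cast_zero, Nat.cast_one, add_zero] at hK hK1
    set K : ℝ := (d : ℝ) * (volume (Metric.ball (0 : EuclideanSpace ℝ (Fin d)) 1)).toReal
    have hE1 : c * (K * ((1 / a) ^ d * Real.Gamma d)) = 1 := by
      have h1 : ∫ z, (fun _ : EuclideanSpace ℝ (Fin d) => (1:ℝ)) z ∂ν
          = ∫ z, (c * Real.exp (-(a * ‖z‖))) * 1 := hconv _
      simp only [mul_one] at h1
      rw [integral_const] at h1
      simp only [measure_univ, probReal_univ, ENNReal.toReal_one, smul_eq_mul, one_mul] at h1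
      rw [integral_const_mul, hK] at h1
      exact h1.symm
    have hE2 : ∫ z, ‖z‖ ∂ν = c * (K * ((1 / a) ^ (d + 1) * Real.Gamma ((d : ℝ) + 1))) := by
      have h2 := hconv fun z => ‖z‖
      simp only [mul_assoc] at h2
      rw [h2, integral_const_mul, hK1]
    have hΓ : Real.Gamma ((d : ℝ) + 1) = d * Real.Gamma d := by
      refine Real.Gamma_add_one ?_
      have : (0:ℝ) < d := by exact_mod_cast hd
      exact this.ne'
    have hgoal : Δ * (d : ℝ) / ε = (d : ℝ) * (1 / a) := by
      rw [ha_def]; field_simp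
    rw [hE2, hΓ, pow_succ, hgoal]
    linear_combination ((d : ℝ) * (1 / a)) * hE1
  -- pointwise bound and integrability of the integrand
  have hmemB : ∀ z : EuclideanSpace ℝ (Fin d),
      projBall R (wstar + z) ∈ Metric.closedBall (0 : EuclideanSpace ℝ (Fin d)) R :=
    fun z => mem_closedBall_zero_iff.2 (projBall_norm_le hR _)
  have hwsB : wstar ∈ Metric.closedBall (0 : EuclideanSpace ℝ (Fin d)) R :=
    mem_closedBall_zero_iff.2 hws
  have hPt : ∀ z : EuclideanSpace ℝ (Fin d),
      F (projBall R (wstar + z)) ≤ F wstar + L * ‖z‖ := by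
    intro z
    have h2 : ‖projBall R (wstar + z) - wstar‖ ≤ ‖z‖ := by
      have := projBall_dist_le hR hws (wstar + z)
      rwa [add_sub_cancel_left] at this
    have h1 := hLip _ (hmemB z) wstar hwsB
    have h3 : F (projBall R (wstar + z)) - F wstar
        ≤ L * ‖projBall R (wstar + z) - wstar‖ := (le_abs_self _).trans h1
    have h4 : L * ‖projBall R (wstar + z) - wstar‖ ≤ L * ‖z‖ :=
      mul_le_mul_of_nonneg_left h2 hL.le
    linarith
  have hFc : ContinuousOn F (Metric.closedBall (0 : EuclideanSpace ℝ (Fin d)) R) := by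
    refine LipschitzOnWith.continuousOn (K := L.toNNReal) ?_
    rw [lipschitzOnWith_iff_dist_le_mul]
    intro x hx y hy
    rw [Real.dist_eq, dist_eq_norm, Real.coe_toNNReal _ hL.le]
    exact hLip x hx y hy
  have hcont : Continuous fun z => F (projBall R (wstar + z)) :=
    hFc.comp_continuous
      ((projBall_continuous hR).comp (continuous_const.add continuous_id))
      fun z => hmemB z
  have h0B : (0 : EuclideanSpace ℝ (Fin d)) ∈ Metric.closedBall
      (0 : EuclideanSpace ℝ (Fin d)) R := mem_closedBall_zero_iff.2 (by simp [hR.le])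
  have hInt1 : Integrable (fun z => F (projBall R (wstar + z))) ν := by
    refine (integrable_const (|F 0| + L * R)).mono'
      hcont.aestronglyMeasurable (Filter.Eventually.of_forall fun z => ?_)
    have h1 := hLip _ (hmemB z) 0 h0B
    rw [sub_zero] at h1
    have h2 : L * ‖projBall R (wstar + z)‖ ≤ L * R :=
      mul_le_mul_of_nonneg_left (projBall_norm_le hR _) hL.le
    have h3 := abs_sub_abs_le_abs_sub (F (projBall R (wstar + z))) (F 0)
    rw [Real.norm_eq_abs]
    linarith
  have hInt2 : Integrable (fun z : EuclideanSpace ℝ (Fin d) => F wstar + L * ‖z‖) ν :=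
    (integrable_const _).add (hIntNormν.const_mul L)
  have hmono : (∫ z, F (projBall R (wstar + z)) ∂ν)
      ≤ ∫ z, (F wstar + L * ‖z‖) ∂ν := integral_mono hInt1 hInt2 hPt
  have hsum : ∫ z, (F wstar + L * ‖z‖) ∂ν = F wstar + L * (Δ * d / ε) := by
    rw [integral_add (integrable_const _) (hIntNormν.const_mul L), integral_const,
      integral_const_mul, hval]
    simp [measure_univ]
  have : L * (Δ * (d : ℝ) / ε) = L * Δ * d / ε := by ring
  rw [hsum] at hmono
  linarith
end

section
/- Let d ≥ 1 and ε, Δ, β > 0. Let F : ℝ^d → ℝ be β-smooth, let w* be a global minimizer of F over ℝ^d, and let ν be the probability measure on ℝ^d whose density with respect to Lebesgue measure is proportional to exp(−(ε/Δ)‖t‖₂). Then ∫_{ℝ^d} F(w* + z) dν(z) − F(w*) ≤ (β/2)·d(d+1)·Δ²/ε² ≤ β·d²·Δ²/ε². -/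
open MeasureTheory Set Metric

section polar
lemma polar_lintegral {E : Type*} [NormedAddCommGroup E] [NormedSpace ℝ E]
    [MeasurableSpace E] [BorelSpace E] [FiniteDimensional ℝ E] [Nontrivial E]
    (μ : Measure E) [μ.IsAddHaarMeasure] (φ : ℝ → ENNReal) (hφ : Measurable φ) :
    ∫⁻ x, φ ‖x‖ ∂μ = μ.toSphere univ *
      ∫⁻ r in Ioi (0:ℝ), ENNReal.ofReal (r ^ (Module.finrank ℝ E - 1)) * φ r := by
  have h1 : ∫⁻ x, φ ‖x‖ ∂μ = ∫⁻ x in ({(0:E)}ᶜ : Set E), φ ‖x‖ ∂μ := by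
    rw [MeasureTheory.restrict_compl_singleton]
  rw [h1, ← lintegral_subtype_comap (measurableSet_singleton (0:E)).compl]
  have h2 : ∫⁻ x : ({(0:E)}ᶜ : Set E), φ ‖x.1‖ ∂(Measure.comap Subtype.val μ) =
      ∫⁻ p : sphere (0:E) 1 × Ioi (0:ℝ), φ p.2
        ∂(μ.toSphere.prod (Measure.volumeIoiPow (Module.finrank ℝ E - 1))) :=
    by have h := (μ.measurePreserving_homeomorphUnitSphereProd).lintegral_comp
        (f := fun p : sphere (0:E) 1 × Ioi (0:ℝ) => φ p.2) (by fun_prop)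
       simpa using h
  rw [h2, lintegral_prod _ (by fun_prop)]
  simp only [lintegral_const]
  rw [mul_comm]
  congr 1
  rw [Measure.volumeIoiPow,
    lintegral_withDensity_eq_lintegral_mul _ (by fun_prop) (by fun_prop)]
  rw [← lintegral_subtype_comap measurableSet_Ioi
    (fun r : ℝ => ENNReal.ofReal (r ^ (Module.finrank ℝ E - 1)) * φ r)]
  rfl

lemma descent {E : Type*} [NormedAddCommGroup E] [InnerProductSpace ℝ E] [CompleteSpace E]
    (F : E → ℝ) (F' : E → E) (β : ℝ)
    (hgrad : ∀ w, HasGradientAt F (F' w) w)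
    (hsmooth : ∀ w w', ‖F' w - F' w'‖ ≤ β * ‖w - w'‖)
    (w z : E) (hw : F' w = 0) : F (w + z) ≤ F w + β / 2 * ‖z‖ ^ 2 := by
  set ψ : ℝ → ℝ := fun t => β / 2 * t ^ 2 * ‖z‖ ^ 2 - F (w + t • z) with hψdef
  have hline : ∀ t : ℝ, HasDerivAt (fun s : ℝ => w + s • z) z t := by
    intro t
    simpa using ((hasDerivAt_id t).smul_const z).const_add w
  have hφ : ∀ t : ℝ, HasDerivAt (fun s : ℝ => F (w + s • z))
      (inner ℝ (F' (w + t • z)) z : ℝ) t := by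
    intro t
    have := ((hgrad (w + t • z)).hasFDerivAt).comp_hasDerivAt t (hline t)
    simp at this; exact this
  have hψ : ∀ t : ℝ, HasDerivAt ψ (β * t * ‖z‖ ^ 2 - inner ℝ (F' (w + t • z)) z) t := by
    intro t
    have h1 : HasDerivAt (fun s : ℝ => β / 2 * s ^ 2 * ‖z‖ ^ 2)
        (β * t * ‖z‖ ^ 2) t := by
      have := ((hasDerivAt_pow 2 t).const_mul (β / 2)).mul_const (‖z‖ ^ 2)
      refine this.congr_deriv ?_
      rw [show (2:ℕ) - 1 = 1 from rfl]; push_cast; ring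
    exact h1.sub (hφ t)
  have hmono : MonotoneOn ψ (Icc (0:ℝ) 1) := by
    apply monotoneOn_of_deriv_nonneg (convex_Icc 0 1)
    · have : Differentiable ℝ ψ := fun t => (hψ t).differentiableAt
      exact this.continuous.continuousOn
    · intro x _
      exact (hψ x).differentiableAt.differentiableWithinAt
    · intro x hx
      rw [interior_Icc] at hx
      rw [(hψ x).deriv]
      have hb : (inner ℝ (F' (w + x • z)) z : ℝ) ≤ β * x * ‖z‖ ^ 2 := by
        calc (inner ℝ (F' (w + x • z)) z : ℝ) ≤ ‖F' (w + x • z)‖ * ‖z‖ :=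
              real_inner_le_norm _ _
          _ ≤ (β * ‖(w + x • z) - w‖) * ‖z‖ := by
              have := hsmooth (w + x • z) w
              rw [hw, sub_zero] at this
              exact mul_le_mul_of_nonneg_right this (norm_nonneg _)
          _ = β * x * ‖z‖ ^ 2 := by
              rw [add_sub_cancel_left, norm_smul, Real.norm_of_nonneg hx.1.le]
              ring
      linarith
  have h01 := hmono (left_mem_Icc.mpr zero_le_one) (right_mem_Icc.mpr zero_le_one) zero_le_one
  simp only [hψdef, zero_smul, add_zero, one_smul, zero_pow, one_pow] at h01
  nlinarith [h01]

lemma Lval (d : ℕ) (hd : 1 ≤ d) (k : ℕ) (a c : ℝ) (ha : 0 < a) (hc : 0 ≤ c) :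
    ∫⁻ r in Ioi (0:ℝ), ENNReal.ofReal (r ^ (d - 1)) *
        (ENNReal.ofReal (c * Real.exp (-a * r)) * ENNReal.ofReal (r ^ k)) =
      ENNReal.ofReal (c * ((1 / a) ^ ((d + k : ℕ) : ℝ) * Real.Gamma ((d + k : ℕ) : ℝ))) := by
  rw [setLIntegral_congr_fun measurableSet_Ioi
    (fun r (hr : 0 < r) => show ENNReal.ofReal (r ^ (d - 1)) *
        (ENNReal.ofReal (c * Real.exp (-a * r)) * ENNReal.ofReal (r ^ k)) =
        ENNReal.ofReal (c * (r ^ (((d + k : ℕ) : ℝ) - 1) * Real.exp (-(a * r)))) from ?_)]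
  · rw [← ofReal_integral_eq_lintegral_ofReal]
    · congr 1
      rw [MeasureTheory.integral_const_mul c _,
        Real.integral_rpow_mul_exp_neg_mul_Ioi (by positivity) ha]
    · have h := (integrableOn_rpow_mul_exp_neg_mul_rpow
        (s := ((d + k : ℕ) : ℝ) - 1) (p := 1) (by
          have : (1:ℝ) ≤ ((d + k : ℕ) : ℝ) := by exact_mod_cast (by omega : 1 ≤ d + k)
          linarith) one_pos ha).const_mul c
      simpa [Real.rpow_one, neg_mul] using h
    · filter_upwards [ae_restrict_mem measurableSet_Ioi] with r hr
      have : (0:ℝ) < r := hr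
      positivity
  · have hrpow : r ^ (d - 1) * r ^ k = r ^ (((d + k : ℕ) : ℝ) - 1) := by
      rw [← pow_add]
      have h1 : d - 1 + k = d + k - 1 := by omega
      rw [h1, ← Real.rpow_natCast r (d + k - 1)]
      congr 1
      have h2 : 1 ≤ d + k := by omega
      push_cast [Nat.cast_sub h2]
      ring
    rw [← ENNReal.ofReal_mul (by positivity), ← ENNReal.ofReal_mul (by positivity)]
    congr 1
    rw [← hrpow]
    ring
end polar


/-- For `F` `β`-smooth with global minimizer `w*`, and `ν` the probability
measure with density proportional to `exp(−(ε/Δ)‖t‖)`, output perturbation satisfies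
`∫ F(w* + z) dν(z) − F(w*) ≤ (β/2)·d(d+1)·Δ²/ε² ≤ β·d²·Δ²/ε²`. -/
theorem stmt_8 (d : ℕ) (hd : 1 ≤ d) (ε Δ β : ℝ) (hε : 0 < ε) (hΔ : 0 < Δ) (hβ : 0 < β)
    (F : EuclideanSpace ℝ (Fin d) → ℝ)
    (F' : EuclideanSpace ℝ (Fin d) → EuclideanSpace ℝ (Fin d))
    (hgrad : ∀ w, HasGradientAt F (F' w) w)
    (hsmooth : ∀ w w', ‖F' w - F' w'‖ ≤ β * ‖w - w'‖)
    (wstar : EuclideanSpace ℝ (Fin d)) (hmin : ∀ w, F wstar ≤ F w)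
    (c : ℝ) (hc : 0 < c)
    (ν : Measure (EuclideanSpace ℝ (Fin d)))
    (hν : ν = volume.withDensity
      (fun t => ENNReal.ofReal (c * Real.exp (-(ε / Δ) * ‖t‖))))
    (hprob : IsProbabilityMeasure ν) :
    ((∫ z, F (wstar + z) ∂ν) - F wstar ≤ β / 2 * (d * (d + 1)) * Δ ^ 2 / ε ^ 2) ∧
    (β / 2 * (d * (d + 1)) * Δ ^ 2 / ε ^ 2 ≤ β * d ^ 2 * Δ ^ 2 / ε ^ 2) := by
  classical
  haveI : Nonempty (Fin d) := ⟨⟨0, hd⟩⟩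
  haveI hnt : Nontrivial (EuclideanSpace ℝ (Fin d)) := inferInstance
  have hfr : Module.finrank ℝ (EuclideanSpace ℝ (Fin d)) = d := finrank_euclideanSpace_fin
  have ha : 0 < ε / Δ := div_pos hε hΔ
  set a : ℝ := ε / Δ with ha_def
  -- gradient zero at min
  have hF'0 : F' wstar = 0 := by
    have hloc : IsLocalMin F wstar := Filter.Eventually.of_forall hmin
    have h0 := hloc.hasFDerivAt_eq_zero (hgrad wstar).hasFDerivAt
    have h1 := congrArg (InnerProductSpace.toDual ℝ (EuclideanSpace ℝ (Fin d))).symm h0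
    simpa using h1
  set K := (volume : Measure (EuclideanSpace ℝ (Fin d))).toSphere univ with hK_def
  set q : ℕ → ℝ := fun k => c * ((1 / a) ^ ((d + k : ℕ) : ℝ) * Real.Gamma ((d + k : ℕ) : ℝ))
    with hq_def
  -- total mass
  have hmass : K * ENNReal.ofReal (q 0) = 1 := by
    have h1 : ν univ = ∫⁻ x, (fun r : ℝ => ENNReal.ofReal (c * Real.exp (-a * r)) *
        ENNReal.ofReal (r ^ (0:ℕ))) ‖x‖ ∂(volume : Measure (EuclideanSpace ℝ (Fin d))) := by
      rw [hν, withDensity_apply _ MeasurableSet.univ, setLIntegral_univ]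
      congr 1
      funext x
      simp
    rw [measure_univ] at h1
    have hp := polar_lintegral (volume : Measure (EuclideanSpace ℝ (Fin d)))
      (fun r : ℝ => ENNReal.ofReal (c * Real.exp (-a * r)) * ENNReal.ofReal (r ^ (0:ℕ)))
      (by fun_prop)
    rw [hfr] at hp
    rw [← Lval d hd 0 a c ha hc.le, ← hp, ← h1]
  -- second moment
  have hM : ∫⁻ z, ENNReal.ofReal (‖z‖ ^ 2) ∂ν = K * ENNReal.ofReal (q 2) := by
    have h1 : ∫⁻ z, ENNReal.ofReal (‖z‖ ^ 2) ∂ν =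
        ∫⁻ x, (fun r : ℝ => ENNReal.ofReal (c * Real.exp (-a * r)) *
          ENNReal.ofReal (r ^ (2:ℕ))) ‖x‖ ∂(volume : Measure (EuclideanSpace ℝ (Fin d))) := by
      rw [hν, lintegral_withDensity_eq_lintegral_mul _ (by fun_prop) (by fun_prop)]
      simp only [Pi.mul_apply]
    have hp := polar_lintegral (volume : Measure (EuclideanSpace ℝ (Fin d)))
      (fun r : ℝ => ENNReal.ofReal (c * Real.exp (-a * r)) * ENNReal.ofReal (r ^ (2:ℕ)))
      (by fun_prop)
    rw [hfr] at hp
    rw [h1, hp, Lval d hd 2 a c ha hc.le]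
  -- relation q 2 = q 0 * m
  have hdpos : (0:ℝ) < d := by exact_mod_cast hd
  have hq2 : q 2 = q 0 * ((d:ℝ) * ((d:ℝ) + 1) / a ^ 2) := by
    simp only [hq_def]
    push_cast
    have hG2 : Real.Gamma ((d:ℝ) + 2) = ((d:ℝ) + 1) * ((d:ℝ) * Real.Gamma (d:ℝ)) := by
      have e1 : (d:ℝ) + 2 = ((d:ℝ) + 1) + 1 := by ring
      rw [e1, Real.Gamma_add_one (by positivity), Real.Gamma_add_one (by positivity)]
    have hr2 : (1 / a) ^ ((d:ℝ) + 2) = (1 / a) ^ ((d:ℝ)) * (1 / a) ^ (2:ℝ) :=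
      Real.rpow_add (by positivity) _ _
    have hr2' : (1 / a) ^ (2:ℝ) = 1 / a ^ 2 := by
      rw [show (2:ℝ) = ((2:ℕ):ℝ) by norm_num, Real.rpow_natCast]
      rw [div_pow, one_pow]
    rw [hG2, hr2, hr2']
    field_simp
    ring
  have hq0 : 0 ≤ q 0 := by
    simp only [hq_def]
    have hΓ : 0 < Real.Gamma ((d + 0:ℕ):ℝ) :=
      Real.Gamma_pos_of_pos (by exact_mod_cast (by omega : 0 < d + 0))
    positivity
  have hm : (0:ℝ) ≤ (d:ℝ) * ((d:ℝ) + 1) / a ^ 2 := by positivity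
  have hM2 : ∫⁻ z, ENNReal.ofReal (‖z‖ ^ 2) ∂ν =
      ENNReal.ofReal ((d:ℝ) * ((d:ℝ) + 1) / a ^ 2) := by
    rw [hM, hq2, ENNReal.ofReal_mul hq0, ← mul_assoc, hmass, one_mul]
  -- the function G
  set G : EuclideanSpace ℝ (Fin d) → ℝ := fun z => F (wstar + z) - F wstar with hG_def
  have hFdiff : Differentiable ℝ F := fun w => (hgrad w).hasFDerivAt.differentiableAt
  have hGcont : Continuous G :=
    (hFdiff.continuous.comp (continuous_const.add continuous_id)).sub continuous_const
  have hG0 : ∀ z, 0 ≤ G z := fun z => sub_nonneg.mpr (hmin _)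
  have hGle : ∀ z, G z ≤ β / 2 * ‖z‖ ^ 2 := by
    intro z
    have := descent F F' β hgrad hsmooth wstar z hF'0
    simp only [hG_def]
    linarith
  have hGlint : ∫⁻ z, ENNReal.ofReal (G z) ∂ν ≤
      ENNReal.ofReal (β / 2 * ((d:ℝ) * ((d:ℝ) + 1) / a ^ 2)) := by
    calc ∫⁻ z, ENNReal.ofReal (G z) ∂ν
        ≤ ∫⁻ z, ENNReal.ofReal (β / 2) * ENNReal.ofReal (‖z‖ ^ 2) ∂ν := by
          apply lintegral_mono
          intro z
          dsimp only
          rw [← ENNReal.ofReal_mul (by positivity)]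
          exact ENNReal.ofReal_le_ofReal (hGle z)
      _ = ENNReal.ofReal (β / 2) * ∫⁻ z, ENNReal.ofReal (‖z‖ ^ 2) ∂ν :=
          lintegral_const_mul' _ _ ENNReal.ofReal_ne_top
      _ = ENNReal.ofReal (β / 2 * ((d:ℝ) * ((d:ℝ) + 1) / a ^ 2)) := by
          rw [hM2, ← ENNReal.ofReal_mul (by positivity)]
  have hGint : Integrable G ν :=
    ⟨hGcont.aestronglyMeasurable,
      (hasFiniteIntegral_iff_ofReal (ae_of_all _ hG0)).2
        (lt_of_le_of_lt hGlint ENNReal.ofReal_lt_top)⟩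
  have hGval : ∫ z, G z ∂ν ≤ β / 2 * ((d:ℝ) * ((d:ℝ) + 1) / a ^ 2) := by
    rw [integral_eq_lintegral_of_nonneg_ae (ae_of_all _ hG0) hGcont.aestronglyMeasurable]
    calc (∫⁻ z, ENNReal.ofReal (G z) ∂ν).toReal
        ≤ (ENNReal.ofReal (β / 2 * ((d:ℝ) * ((d:ℝ) + 1) / a ^ 2))).toReal :=
          ENNReal.toReal_mono ENNReal.ofReal_ne_top hGlint
      _ = β / 2 * ((d:ℝ) * ((d:ℝ) + 1) / a ^ 2) := ENNReal.toReal_ofReal (by positivity)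
  have hsplit : ∫ z, F (wstar + z) ∂ν = (∫ z, G z ∂ν) + F wstar := by
    have h1 : (fun z => F (wstar + z)) = fun z => G z + F wstar := by
      funext z; simp [hG_def]
    rw [h1, integral_add hGint (integrable_const _), integral_const, probReal_univ]
    simp
  constructor
  · have heq : β / 2 * ((d:ℝ) * ((d:ℝ) + 1) / a ^ 2) =
        β / 2 * ((d:ℝ) * ((d:ℝ) + 1)) * Δ ^ 2 / ε ^ 2 := by
      rw [ha_def]
      field_simp
    rw [hsplit]
    push_cast
    linarith [hGval, heq ▸ hGval]
  · have h1 : (1:ℝ) ≤ (d:ℝ) := by exact_mod_cast hd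
    rw [div_le_div_iff₀ (by positivity) (by positivity)]
    have hdd : (d:ℝ) * ((d:ℝ) + 1) ≤ 2 * (d:ℝ) ^ 2 := by nlinarith
    have hpos : (0:ℝ) ≤ β / 2 * Δ ^ 2 * ε ^ 2 := by positivity
    nlinarith [mul_le_mul_of_nonneg_right hdd hpos]
end

section
/- Let d, n ≥ 1 and τ, μ, L, R > 0, let 𝒳 be a set, and let f : ℝ^d × 𝒳 → ℝ be such that for every x ∈ 𝒳 the function f(·,x) is differentiable, μ-strongly convex on ℝ^d, and L-Lipschitz on B(0,R), and such that a_R ≤ f(w,x) ≤ A_R for all w ∈ B(0,R) and x ∈ 𝒳. Define the tilted empirical loss F_τ(w,X) = (1/τ)·log((1/n)·Σᵢ₌₁ⁿ exp(τ·f(w,xᵢ))) for X = (x₁,…,xₙ) ∈ 𝒳ⁿ, and assume F_τ(·,X) is μ-strongly convex for every X ∈ 𝒳ⁿ (this holds when f(·,x) is twice differentiable and μ-strongly convex). If X, X' ∈ 𝒳ⁿ are adjacent datasets whose tilted-loss minimizers w*(X), w*(X') over ℝ^d lie in B(0,R), then ‖w*(X) − w*(X')‖₂ ≤ (2L/μ)·min{1,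 e^{τ(A_R − a_R)}/n}. -/
open Real Filter

theorem aux_norm_combo {E : Type*} [NormedAddCommGroup E] [InnerProductSpace ℝ E]
    (a b : E) (t : ℝ) :
    ‖(1 - t) • a + t • b‖ ^ 2
      = (1 - t) * ‖a‖ ^ 2 + t * ‖b‖ ^ 2 - t * (1 - t) * ‖a - b‖ ^ 2 := by
  have h1 := norm_add_sq_real ((1 - t) • a) (t • b)
  have h2 := norm_sub_sq_real a b
  simp only [norm_smul, Real.norm_eq_abs, real_inner_smul_left, real_inner_smul_right,
    mul_pow, sq_abs] at h1
  nlinarith [h1, h2]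

theorem aux_strong_min {E : Type*} [NormedAddCommGroup E] [InnerProductSpace ℝ E]
    {F : E → ℝ} {μ : ℝ}
    (hconv : ConvexOn ℝ Set.univ (fun w => F w - μ / 2 * ‖w‖ ^ 2))
    {w : E} (hmin : ∀ u, F w ≤ F u) (u : E) :
    μ / 2 * ‖u - w‖ ^ 2 ≤ F u - F w := by
  have key : ∀ t ∈ Set.Ioo (0:ℝ) 1, μ / 2 * (1 - t) * ‖u - w‖ ^ 2 ≤ F u - F w := by
    intro t ht
    obtain ⟨ht0, ht1⟩ := ht
    have hc := hconv.2 (Set.mem_univ w) (Set.mem_univ u)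
      (by linarith : (0:ℝ) ≤ 1 - t) ht0.le (by ring)
    simp only [smul_eq_mul] at hc
    have hid := aux_norm_combo w u t
    rw [norm_sub_rev w u] at hid
    rw [hid] at hc
    have hmin' := hmin ((1 - t) • w + t • u)
    have step : t * (μ / 2 * (1 - t) * ‖u - w‖ ^ 2) ≤ t * (F u - F w) := by
      nlinarith [hc, hmin']
    exact le_of_mul_le_mul_left step ht0
  have hT : Tendsto (fun t : ℝ => μ / 2 * (1 - t) * ‖u - w‖ ^ 2)
      (nhdsWithin 0 (Set.Ioi 0)) (nhds (μ / 2 * ‖u - w‖ ^ 2)) := by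
    have hcont : Continuous fun t : ℝ => μ / 2 * (1 - t) * ‖u - w‖ ^ 2 := by continuity
    have h := (hcont.tendsto 0).mono_left (nhdsWithin_le_nhds (s := Set.Ioi (0:ℝ)))
    simpa using h
  refine le_of_tendsto hT ?_
  filter_upwards [Ioo_mem_nhdsGT_of_mem (Set.mem_Ico.mpr ⟨le_refl (0:ℝ), zero_lt_one⟩)] with t ht
  exact key t ht

theorem aux_scalar_half (nr α β s u v : ℝ) (hα : 0 < α) (hn : 0 < nr)
    (hu2 : u ≤ β) (hv1 : α ≤ v) (hvu : v ≤ u)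
    (hs : 0 ≤ s) (hSv : nr * α ≤ s + v) :
    s * (|v - u| / ((s + u) * (s + v))) + (u / (s + u) + v / (s + v)) ≤ 2 * β / (nr * α) := by
  have hv0 : 0 < v := lt_of_lt_of_le hα hv1
  have hQ : 0 < s + v := by linarith
  have hP : 0 < s + u := by linarith
  rw [abs_sub_comm, abs_of_nonneg (by linarith : (0:ℝ) ≤ u - v)]
  have e1 : s * ((u - v) / ((s + u) * (s + v))) ≤ (u - v) / (s + v) := by
    rw [mul_div_assoc']
    rw [div_le_div_iff₀ (by positivity) hQ]
    nlinarith [mul_nonneg (mul_nonneg (sub_nonneg.2 hvu) hQ.le) (by linarith : (0:ℝ) ≤ u)]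
  have e2 : u / (s + u) ≤ u / (s + v) := by
    apply div_le_div_of_nonneg_left (by linarith) hQ (by linarith)
  have e3 : (u - v) / (s + v) + (u / (s + v) + v / (s + v)) = 2 * u / (s + v) := by
    field_simp; ring
  have e4 : 2 * u / (s + v) ≤ 2 * β / (nr * α) := by
    apply div_le_div₀ (by linarith) (by linarith) (by positivity) hSv
  linarith

theorem aux_scalar (nr α β s u v : ℝ) (hα : 0 < α) (hn : 0 < nr)
    (hu1 : α ≤ u) (hu2 : u ≤ β) (hv1 : α ≤ v) (hv2 : v ≤ β)
    (hs : 0 ≤ s) (hSu : nr * α ≤ s + u) (hSv : nr * α ≤ s + v) :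
    s * (|v - u| / ((s + u) * (s + v))) + (u / (s + u) + v / (s + v)) ≤ 2 * β / (nr * α) := by
  rcases le_total v u with h | h
  · exact aux_scalar_half nr α β s u v hα hn hu2 hv1 h hs hSv
  · have h2 := aux_scalar_half nr α β s v u hα hn hv2 hu1 h hs hSu
    calc s * (|v - u| / ((s + u) * (s + v))) + (u / (s + u) + v / (s + v))
        = s * (|u - v| / ((s + v) * (s + u))) + (v / (s + v) + u / (s + u)) := by
          rw [abs_sub_comm]; ring
      _ ≤ 2 * β / (nr * α) := h2

set_option maxHeartbeats 2000000

/-- Sensitivity of the tilted ERM (TERM) objective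
`F_τ(w,X) = (1/τ)·log((1/n)·Σᵢ exp(τ f(w,xᵢ)))`: when each `f(·,x)` is differentiable,
`μ`-strongly convex, `L`-Lipschitz on `B(0,R)`, and bounded by `a_R ≤ f ≤ A_R` on
`B(0,R) × 𝒳`, and `F_τ(·,X)` is `μ`-strongly convex for every dataset `X`, then the
minimizers over adjacent datasets (assumed to lie in `B(0,R)`) satisfy
`‖w*(X) − w*(X')‖ ≤ (2L/μ)·min{1, e^{τ(A_R − a_R)}/n}`. -/
theorem stmt_17 (d n : ℕ) (hd : 1 ≤ d) (hn : 1 ≤ n)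
    (τ μ L R : ℝ) (hτ : 0 < τ) (hμ : 0 < μ) (hL : 0 < L) (hR : 0 < R)
    (aR AR : ℝ)
    {𝒳 : Type*} (f : EuclideanSpace ℝ (Fin d) → 𝒳 → ℝ)
    (hdiff : ∀ x : 𝒳, Differentiable ℝ (fun w => f w x))
    (hsconv : ∀ x : 𝒳, ConvexOn ℝ Set.univ (fun w => f w x - μ / 2 * ‖w‖ ^ 2))
    (hLip : ∀ x : 𝒳, ∀ w ∈ Metric.closedBall (0 : EuclideanSpace ℝ (Fin d)) R,
      ∀ w' ∈ Metric.closedBall (0 : EuclideanSpace ℝ (Fin d)) R,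
      |f w x - f w' x| ≤ L * ‖w - w'‖)
    (hbound : ∀ w ∈ Metric.closedBall (0 : EuclideanSpace ℝ (Fin d)) R,
      ∀ x : 𝒳, aR ≤ f w x ∧ f w x ≤ AR)
    (Fτ : EuclideanSpace ℝ (Fin d) → (Fin n → 𝒳) → ℝ)
    (hFτ : ∀ w X, Fτ w X = (1 / τ) * Real.log ((1 / (n : ℝ)) * ∑ i, Real.exp (τ * f w (X i))))
    (hFτsconv : ∀ X : Fin n → 𝒳,
      ConvexOn ℝ Set.univ (fun w => Fτ w X - μ / 2 * ‖w‖ ^ 2))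
    (X X' : Fin n → 𝒳) (hadj : ∃ i : Fin n, ∀ j : Fin n, j ≠ i → X j = X' j)
    (wstar wstar' : EuclideanSpace ℝ (Fin d))
    (hwmin : ∀ u, Fτ wstar X ≤ Fτ u X) (hw'min : ∀ u, Fτ wstar' X' ≤ Fτ u X')
    (hwB : ‖wstar‖ ≤ R) (hw'B : ‖wstar'‖ ≤ R) :
    ‖wstar - wstar'‖ ≤ 2 * L / μ * min 1 (Real.exp (τ * (AR - aR)) / n) := by
  classical
  obtain ⟨i, hi⟩ := hadj
  have hn0 : (0:ℝ) < (n:ℝ) := by exact_mod_cast hn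
  have h1n : (1/(n:ℝ)) ≠ 0 := one_div_ne_zero (ne_of_gt hn0)
  set α := Real.exp (τ * aR) with hαdef
  set β := Real.exp (τ * AR) with hβdef
  have hα0 : 0 < α := Real.exp_pos _
  have hβ0 : 0 < β := Real.exp_pos _
  set S : (Fin n → 𝒳) → EuclideanSpace ℝ (Fin d) → ℝ :=
    fun Y w => ∑ j, Real.exp (τ * f w (Y j)) with hSdef
  have hSpos : ∀ (Y : Fin n → 𝒳) (w), 0 < S Y w := fun Y w =>
    Finset.sum_pos (fun j _ => Real.exp_pos _) ⟨⟨0, hn⟩, Finset.mem_univ _⟩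
  have hFτ' : ∀ (w) (Y : Fin n → 𝒳), Fτ w Y = (1/τ) * Real.log ((1/(n:ℝ)) * S Y w) := by
    intro w Y; rw [hFτ]
  have hebound : ∀ x : 𝒳, ∀ w ∈ Metric.closedBall (0 : EuclideanSpace ℝ (Fin d)) R,
      α ≤ Real.exp (τ * f w x) ∧ Real.exp (τ * f w x) ≤ β := by
    intro x w hw
    obtain ⟨h1, h2⟩ := hbound w hw x
    exact ⟨Real.exp_le_exp.2 (by nlinarith), Real.exp_le_exp.2 (by nlinarith)⟩
  have hSlb : ∀ (Y : Fin n → 𝒳), ∀ w ∈ Metric.closedBall (0 : EuclideanSpace ℝ (Fin d)) R,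
      (n:ℝ) * α ≤ S Y w := by
    intro Y w hw
    calc (n:ℝ) * α = ∑ _j : Fin n, α := by
          rw [Finset.sum_const, Finset.card_univ, Fintype.card_fin, nsmul_eq_mul]
      _ ≤ S Y w := Finset.sum_le_sum fun j _ => (hebound (Y j) w hw).1
  -- pointwise Lipschitz bound for Fτ on the closed ball
  have hLipF : ∀ (Y : Fin n → 𝒳), ∀ w ∈ Metric.closedBall (0 : EuclideanSpace ℝ (Fin d)) R,
      ∀ w' ∈ Metric.closedBall (0 : EuclideanSpace ℝ (Fin d)) R,
      Fτ w Y - Fτ w' Y ≤ L * ‖w - w'‖ := by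
    intro Y w hw w' hw'
    have hS : S Y w ≤ Real.exp (τ * (L * ‖w - w'‖)) * S Y w' := by
      rw [Finset.mul_sum]
      apply Finset.sum_le_sum
      intro j _
      rw [← Real.exp_add]
      apply Real.exp_le_exp.2
      have h := (abs_le.1 (hLip (Y j) w hw w' hw')).2
      nlinarith
    have hlog : Real.log (S Y w) - Real.log (S Y w') ≤ τ * (L * ‖w - w'‖) := by
      have h := Real.log_le_log (hSpos Y w) hS
      rw [Real.log_mul (Real.exp_ne_zero _) (ne_of_gt (hSpos Y w')), Real.log_exp] at h
      linarith
    rw [hFτ' w Y, hFτ' w' Y, Real.log_mul h1n (ne_of_gt (hSpos Y w)),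
      Real.log_mul h1n (ne_of_gt (hSpos Y w'))]
    have h2 : (1/τ) * (Real.log (S Y w) - Real.log (S Y w')) ≤ (1/τ) * (τ * (L * ‖w - w'‖)) :=
      mul_le_mul_of_nonneg_left hlog (by positivity)
    calc (1/τ) * (Real.log (1/(n:ℝ)) + Real.log (S Y w))
          - (1/τ) * (Real.log (1/(n:ℝ)) + Real.log (S Y w'))
        = (1/τ) * (Real.log (S Y w) - Real.log (S Y w')) := by ring
      _ ≤ (1/τ) * (τ * (L * ‖w - w'‖)) := h2
      _ = L * ‖w - w'‖ := by field_simp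
  -- derivatives
  set Df : 𝒳 → EuclideanSpace ℝ (Fin d) → (EuclideanSpace ℝ (Fin d) →L[ℝ] ℝ) :=
    fun x w => fderiv ℝ (fun v => f v x) w with hDfdef
  have hDfd : ∀ (x : 𝒳) (w), HasFDerivAt (fun v => f v x) (Df x w) w := by
    intro x w; exact ((hdiff x) w).hasFDerivAt
  have hDfnorm : ∀ (x : 𝒳), ∀ w ∈ Metric.ball (0 : EuclideanSpace ℝ (Fin d)) R,
      ‖Df x w‖ ≤ L := by
    intro x w hw
    have hlip : LipschitzOnWith (Real.toNNReal L) (fun v => f v x)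
        (Metric.closedBall (0 : EuclideanSpace ℝ (Fin d)) R) := by
      rw [lipschitzOnWith_iff_dist_le_mul]
      intro a ha b hb
      rw [Real.dist_eq, dist_eq_norm, Real.coe_toNNReal _ hL.le]
      exact hLip x a ha b hb
    have h := (hDfd x w).le_of_lipschitzOn
      (Filter.mem_of_superset (Metric.isOpen_ball.mem_nhds hw) Metric.ball_subset_closedBall) hlip
    rwa [Real.coe_toNNReal _ hL.le] at h
  have hSderiv : ∀ (Y : Fin n → 𝒳) (w), HasFDerivAt (S Y)
      (∑ j, (τ * Real.exp (τ * f w (Y j))) • Df (Y j) w) w := by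
    intro Y w
    simp only [hSdef]
    apply HasFDerivAt.fun_sum
    intro j _
    have h1 : HasFDerivAt (fun v => τ * f v (Y j)) (τ • Df (Y j) w) w :=
      (hDfd (Y j) w).const_mul τ
    have h2 := h1.exp
    exact h2.congr_fderiv (by rw [smul_smul, mul_comm])
  have hlogd : ∀ (Y : Fin n → 𝒳) (w : EuclideanSpace ℝ (Fin d)),
      HasFDerivAt (fun v => Real.log (S Y v))
      ((S Y w)⁻¹ • ∑ j, (τ * Real.exp (τ * f w (Y j))) • Df (Y j) w) w :=
    fun Y w => (hSderiv Y w).log (ne_of_gt (hSpos Y w))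
  set D : EuclideanSpace ℝ (Fin d) → ℝ := fun v => Fτ v X - Fτ v X' with hDdef
  have hDrw : D = fun v => (1/τ) * (Real.log (S X v) - Real.log (S X' v)) := by
    funext v
    simp only [hDdef]
    rw [hFτ' v X, hFτ' v X', Real.log_mul h1n (ne_of_gt (hSpos X v)),
      Real.log_mul h1n (ne_of_gt (hSpos X' v))]
    ring
  set Φ : EuclideanSpace ℝ (Fin d) → (EuclideanSpace ℝ (Fin d) →L[ℝ] ℝ) := fun w =>
    (∑ j, (Real.exp (τ * f w (X j)) / S X w) • Df (X j) w)
      - ∑ j, (Real.exp (τ * f w (X' j)) / S X' w) • Df (X' j) w with hΦdef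
  have hDderiv : ∀ w, HasFDerivAt D (Φ w) w := by
    intro w
    have h := ((hlogd X w).sub (hlogd X' w)).const_mul (1/τ)
    rw [hDrw]
    have hval : (1/τ : ℝ) • ((S X w)⁻¹ • ∑ j, (τ * Real.exp (τ * f w (X j))) • Df (X j) w
        - (S X' w)⁻¹ • ∑ j, (τ * Real.exp (τ * f w (X' j))) • Df (X' j) w) = Φ w := by
      simp only [hΦdef]
      rw [smul_sub, smul_smul, smul_smul, Finset.smul_sum, Finset.smul_sum]
      congr 1 <;>
      · apply Finset.sum_congr rfl
        intro j _
        rw [smul_smul]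
        congr 1
        field_simp [hτ.ne']
        try rw [mul_div_mul_left _ _ hτ.ne']
    rw [← hval]
    exact h
  set K : ℝ := L * (2 * Real.exp (τ * (AR - aR)) / n) with hKdef
  have hK0 : 0 ≤ K := by rw [hKdef]; positivity
  -- norm bound on Φ inside the open ball
  have hΦnorm : ∀ w ∈ Metric.ball (0 : EuclideanSpace ℝ (Fin d)) R, ‖Φ w‖ ≤ K := by
    intro w hw
    have hwc : w ∈ Metric.closedBall (0 : EuclideanSpace ℝ (Fin d)) R :=
      Metric.ball_subset_closedBall hw
    set e : Fin n → ℝ := fun j => Real.exp (τ * f w (X j)) with hedef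
    set s : ℝ := ∑ j ∈ Finset.univ.erase i, e j with hsdef
    set u : ℝ := Real.exp (τ * f w (X i)) with hudef
    set v : ℝ := Real.exp (τ * f w (X' i)) with hvdef
    have hu1 : α ≤ u := (hebound (X i) w hwc).1
    have hu2 : u ≤ β := (hebound (X i) w hwc).2
    have hv1 : α ≤ v := (hebound (X' i) w hwc).1
    have hv2 : v ≤ β := (hebound (X' i) w hwc).2
    have hs0 : 0 ≤ s := Finset.sum_nonneg fun j _ => (Real.exp_pos _).le
    have hSX : S X w = s + u := by
      simp only [hSdef, hsdef, hudef, hedef]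
      exact (Finset.sum_erase_add _ _ (Finset.mem_univ i)).symm
    have hSX' : S X' w = s + v := by
      simp only [hSdef, hsdef, hvdef, hedef]
      rw [← Finset.sum_erase_add _ _ (Finset.mem_univ i)]
      congr 1
      apply Finset.sum_congr rfl
      intro j hj
      rw [hi j (Finset.mem_erase.1 hj).1]
    have hP : 0 < s + u := hSX ▸ hSpos X w
    have hQ : 0 < s + v := hSX' ▸ hSpos X' w
    have hSu : (n:ℝ) * α ≤ s + u := hSX ▸ hSlb X w hwc
    have hSv : (n:ℝ) * α ≤ s + v := hSX' ▸ hSlb X' w hwc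
    have hsplit : Φ w = (∑ j ∈ Finset.univ.erase i,
          ((e j / S X w - e j / S X' w) • Df (X j) w))
        + ((u / S X w) • Df (X i) w - (v / S X' w) • Df (X' i) w) := by
      simp only [hΦdef]
      rw [← Finset.sum_erase_add Finset.univ
          (fun j => (Real.exp (τ * f w (X j)) / S X w) • Df (X j) w) (Finset.mem_univ i),
        ← Finset.sum_erase_add Finset.univ
          (fun j => (Real.exp (τ * f w (X' j)) / S X' w) • Df (X' j) w) (Finset.mem_univ i)]
      have hcongr : ∑ j ∈ Finset.univ.erase i,
            (Real.exp (τ * f w (X' j)) / S X' w) • Df (X' j) w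
          = ∑ j ∈ Finset.univ.erase i, (e j / S X' w) • Df (X j) w := by
        apply Finset.sum_congr rfl
        intro j hj
        rw [← hi j (Finset.mem_erase.1 hj).1]
      rw [hcongr]
      have hss : ∀ j, (e j / S X w - e j / S X' w) • Df (X j) w
          = (e j / S X w) • Df (X j) w - (e j / S X' w) • Df (X j) w := fun j =>
        ContinuousLinearMap.ext fun z => by
          simp only [ContinuousLinearMap.sub_apply, ContinuousLinearMap.smul_apply, smul_eq_mul, sub_mul]
      simp only [hss]
      rw [Finset.sum_sub_distrib]
      abel
    have hnorm1 : ‖Φ w‖ ≤ (∑ j ∈ Finset.univ.erase i, |e j / S X w - e j / S X' w| * L)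
        + ((u / S X w) * L + (v / S X' w) * L) := by
      rw [hsplit]
      refine le_trans (norm_add_le _ _) (add_le_add ?_ ?_)
      · refine le_trans (norm_sum_le _ _) (Finset.sum_le_sum ?_)
        intro j hj
        refine le_trans (ContinuousLinearMap.opNorm_smul_le _ _) ?_
        rw [Real.norm_eq_abs]
        exact mul_le_mul_of_nonneg_left (hDfnorm (X j) w hw) (abs_nonneg _)
      · refine le_trans (norm_sub_le _ _) (add_le_add ?_ ?_)
        · refine le_trans (ContinuousLinearMap.opNorm_smul_le _ _) ?_
          rw [Real.norm_eq_abs, abs_of_nonneg (div_nonneg (Real.exp_pos _).le (hSpos X w).le)]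
          exact mul_le_mul_of_nonneg_left (hDfnorm (X i) w hw)
            (div_nonneg (Real.exp_pos _).le (hSpos X w).le)
        · refine le_trans (ContinuousLinearMap.opNorm_smul_le _ _) ?_
          rw [Real.norm_eq_abs, abs_of_nonneg (div_nonneg (Real.exp_pos _).le (hSpos X' w).le)]
          exact mul_le_mul_of_nonneg_left (hDfnorm (X' i) w hw)
            (div_nonneg (Real.exp_pos _).le (hSpos X' w).le)
    have hterm : ∀ j ∈ Finset.univ.erase i,
        |e j / S X w - e j / S X' w| = e j * (|v - u| / ((s + u) * (s + v))) := by
      intro j hj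
      rw [hSX, hSX', div_sub_div _ _ (ne_of_gt hP) (ne_of_gt hQ)]
      rw [show e j * (s + v) - (s + u) * e j = e j * (v - u) by ring]
      rw [abs_div, abs_mul, abs_of_pos (Real.exp_pos _), abs_of_pos (mul_pos hP hQ),
        mul_div_assoc]
    have hsum : ∑ j ∈ Finset.univ.erase i, |e j / S X w - e j / S X' w|
        = s * (|v - u| / ((s + u) * (s + v))) := by
      rw [Finset.sum_congr rfl hterm, ← Finset.sum_mul, ← hsdef]
    have hT : s * (|v - u| / ((s + u) * (s + v))) + (u / (s + u) + v / (s + v))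
        ≤ 2 * β / ((n:ℝ) * α) :=
      aux_scalar (n:ℝ) α β s u v hα0 hn0 hu1 hu2 hv1 hv2 hs0 hSu hSv
    have hKeq : L * (2 * β / ((n:ℝ) * α)) = K := by
      have hexp : Real.exp (τ * (AR - aR)) * α = β := by
        rw [hαdef, hβdef, ← Real.exp_add]
        congr 1
        ring
      rw [hKdef, ← hexp]
      field_simp
    calc ‖Φ w‖ ≤ (∑ j ∈ Finset.univ.erase i, |e j / S X w - e j / S X' w| * L)
        + ((u / S X w) * L + (v / S X' w) * L) := hnorm1
      _ = (s * (|v - u| / ((s + u) * (s + v))) + (u / (s + u) + v / (s + v))) * L := by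
          rw [← Finset.sum_mul, hsum, hSX, hSX']; ring
      _ ≤ (2 * β / ((n:ℝ) * α)) * L :=
          mul_le_mul_of_nonneg_right hT hL.le
      _ = K := by rw [← hKeq]; ring
  -- Lipschitz bound for D on the closed ball (via MVT on the open ball + continuity)
  have hDcont : Continuous D := by
    have : Differentiable ℝ D := fun v => (hDderiv v).differentiableAt
    exact this.continuous
  have hMVT : ∀ w₁ ∈ Metric.closedBall (0 : EuclideanSpace ℝ (Fin d)) R,
      ∀ w₂ ∈ Metric.closedBall (0 : EuclideanSpace ℝ (Fin d)) R,
      |D w₁ - D w₂| ≤ K * ‖w₁ - w₂‖ := by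
    have hball : ∀ a ∈ Metric.ball (0 : EuclideanSpace ℝ (Fin d)) R,
        ∀ b ∈ Metric.ball (0 : EuclideanSpace ℝ (Fin d)) R,
        ‖D b - D a‖ ≤ K * ‖b - a‖ := by
      intro a ha b hb
      exact (convex_ball (0 : EuclideanSpace ℝ (Fin d)) R).norm_image_sub_le_of_norm_fderiv_le
        (fun x _ => (hDderiv x).differentiableAt)
        (fun x hx => by rw [(hDderiv x).fderiv]; exact hΦnorm x hx) ha hb
    intro w₁ hw₁ w₂ hw₂
    rw [Metric.mem_closedBall, dist_zero_right] at hw₁ hw₂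
    have hcont2 : Continuous fun θ : ℝ => |D (θ • w₁) - D (θ • w₂)| :=
      ((hDcont.comp (continuous_id.smul continuous_const)).sub
        (hDcont.comp (continuous_id.smul continuous_const))).abs
    have hTend : Tendsto (fun θ : ℝ => |D (θ • w₁) - D (θ • w₂)|)
        (nhdsWithin 1 (Set.Iio 1)) (nhds (|D w₁ - D w₂|)) := by
      have h := (hcont2.tendsto 1).mono_left (nhdsWithin_le_nhds (s := Set.Iio (1:ℝ)))
      simpa using h
    refine le_of_tendsto hTend ?_
    filter_upwards [Ioo_mem_nhdsLT_of_mem (Set.mem_Ioc.mpr ⟨zero_lt_one, le_refl (1:ℝ)⟩)]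
      with θ hθ
    have hmem : ∀ w : EuclideanSpace ℝ (Fin d), ‖w‖ ≤ R →
        θ • w ∈ Metric.ball (0 : EuclideanSpace ℝ (Fin d)) R := by
      intro w hw
      rw [Metric.mem_ball, dist_zero_right, norm_smul, Real.norm_eq_abs, abs_of_pos hθ.1]
      calc θ * ‖w‖ ≤ θ * R := mul_le_mul_of_nonneg_left hw hθ.1.le
        _ < R := by nlinarith [hθ.2]
    have h := hball _ (hmem w₂ hw₂) _ (hmem w₁ hw₁)
    rw [Real.norm_eq_abs] at h
    calc |D (θ • w₁) - D (θ • w₂)| ≤ K * ‖θ • w₁ - θ • w₂‖ := h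
      _ = K * (θ * ‖w₁ - w₂‖) := by
          rw [← smul_sub, norm_smul, Real.norm_eq_abs, abs_of_pos hθ.1]
      _ ≤ K * ‖w₁ - w₂‖ := by
          have h1 : 0 ≤ K * ‖w₁ - w₂‖ * (1 - θ) :=
            mul_nonneg (mul_nonneg hK0 (norm_nonneg _)) (by linarith [hθ.2])
          nlinarith [h1]
  -- assemble
  have hwmem : wstar ∈ Metric.closedBall (0 : EuclideanSpace ℝ (Fin d)) R :=
    mem_closedBall_zero_iff.mpr hwB
  have hw'mem : wstar' ∈ Metric.closedBall (0 : EuclideanSpace ℝ (Fin d)) R :=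
    mem_closedBall_zero_iff.mpr hw'B
  have hA1 : μ/2 * ‖wstar' - wstar‖ ^ 2 ≤ Fτ wstar' X - Fτ wstar X :=
    aux_strong_min (hFτsconv X) hwmin wstar'
  have hA2 : μ/2 * ‖wstar - wstar'‖ ^ 2 ≤ Fτ wstar X' - Fτ wstar' X' :=
    aux_strong_min (hFτsconv X') hw'min wstar
  rw [norm_sub_rev] at hA1
  have hB : (Fτ wstar' X - Fτ wstar X) + (Fτ wstar X' - Fτ wstar' X')
      ≤ 2 * L * ‖wstar - wstar'‖ := by
    have b1 := hLipF X wstar' hw'mem wstar hwmem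
    have b2 := hLipF X' wstar hwmem wstar' hw'mem
    rw [norm_sub_rev wstar'] at b1
    linarith
  have hC : (Fτ wstar' X - Fτ wstar X) + (Fτ wstar X' - Fτ wstar' X')
      ≤ K * ‖wstar - wstar'‖ := by
    have h := hMVT wstar' hw'mem wstar hwmem
    have h' : D wstar' - D wstar ≤ K * ‖wstar' - wstar‖ := le_trans (le_abs_self _) h
    rw [norm_sub_rev] at h'
    simp only [hDdef] at h'
    linarith
  set c : ℝ := min 1 (Real.exp (τ * (AR - aR)) / n) with hcdef
  have hc0 : 0 ≤ c := le_min zero_le_one (by positivity)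
  have hμΔ : μ * ‖wstar - wstar'‖ ^ 2 ≤ 2 * L * c * ‖wstar - wstar'‖ := by
    rcases le_total (1:ℝ) (Real.exp (τ * (AR - aR)) / n) with h | h
    · rw [hcdef, min_eq_left h]
      linarith
    · rw [hcdef, min_eq_right h]
      have hKeq : K = 2 * L * (Real.exp (τ * (AR - aR)) / n) := by rw [hKdef]; ring
      rw [hKeq] at hC
      linarith
  rcases eq_or_lt_of_le (norm_nonneg (wstar - wstar')) with h0 | h0
  · rw [← h0]
    exact mul_nonneg (by positivity) hc0
  · have hstep : μ * ‖wstar - wstar'‖ ≤ 2 * L * c := by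
      have h := hμΔ
      rw [pow_two, ← mul_assoc] at h
      exact le_of_mul_le_mul_right h h0
    rw [show 2 * L / μ * c = (2 * L * c) / μ by ring, le_div_iff₀ hμ]
    linarith [mul_comm μ ‖wstar - wstar'‖]
end
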